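/- arXiv:1507.08928 — 3 statements merged into one kernel-verified Lean document; each statement's English description precedes it below -/
import Mathlib

section
/- Let k be a field and R = k[x_0, ..., x_d]/I where I is generated by the 2×2 minors of the matrix with rows (x_0, ..., x_{d-1}) and (x_1, ..., x_d) (the rational normal cone of degree d, d ≥ 1). Let I_1 = (x_0, ..., x_{d-1}) and I_2 = (x_1, ..., x_d) in R. Then HS_{R/I_1}(t) = HS_{R/I_2}(t) = 1/(1-t), HS_R(t) = (1 + (d-1)t)/(1-t)^2, and consequently HS_{R/I_1}(t)·HS_{R/I_2}(t)/HS_R(t) = 1/(1 + (d-1)t), which evaluates to 1/d at t = 1. -/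
open PowerSeries MvPolynomial

/-- The Hilbert series of the quotient of a polynomial ring by a (graded) ideal `I`,
using the quotient grading induced by the standard grading. -/
noncomputable def hilbSeries (k : Type) [Field k] {m : ℕ}
    (I : Ideal (MvPolynomial (Fin m) k)) : PowerSeries ℚ :=
  PowerSeries.mk fun n =>
    (Module.finrank k
      ((homogeneousSubmodule (Fin m) k n).map (Ideal.Quotient.mkₐ k I).toLinearMap) : ℚ)



lemma degree_single'' {σ : Type*} (v : σ) (n : ℕ) :
    Finsupp.degree (Finsupp.single v n) = n := by
  rcases eq_or_ne n 0 with rfl | h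
  · simp [Finsupp.degree]
  · exact Finsupp.degree_single v n

lemma image_span {k : Type} [Field k] {m : ℕ} (I : Ideal (MvPolynomial (Fin m) k)) (n : ℕ) :
    (homogeneousSubmodule (Fin m) k n).map (Ideal.Quotient.mkₐ k I).toLinearMap
      = Submodule.span k ((fun u => Ideal.Quotient.mkₐ k I (monomial u 1)) ''
          {u : Fin m →₀ ℕ | u.degree = n}) := by
  rw [homogeneousSubmodule_eq_finsupp_supported, AddMonoidAlgebra.supported_eq_span_single,
    Submodule.map_span, Set.image_image]
  rfl

lemma eq_single_add_sub {m : ℕ} (u : Fin m →₀ ℕ) (i : Fin m) (h : u i ≠ 0) :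
    u = Finsupp.single i 1 + (u - Finsupp.single i 1) := by
  ext j
  rcases eq_or_ne j i with rfl | hji
  · simp [Finsupp.single_apply]; omega
  · simp [Finsupp.single_apply, Ne.symm hji]

lemma rank_one {k : Type} [Field k] {m : ℕ} (I : Ideal (MvPolynomial (Fin m) k)) (v : Fin m)
    (hmem : ∀ (u : Fin m →₀ ℕ) (i : Fin m), i ≠ v → u i ≠ 0 → monomial u (1:k) ∈ I)
    (hnot : ∀ n : ℕ, (monomial (Finsupp.single v n) (1:k)) ∉ I) (n : ℕ) :
    Module.finrank k
      ((homogeneousSubmodule (Fin m) k n).map (Ideal.Quotient.mkₐ k I).toLinearMap) = 1 := by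
  have hspan : (homogeneousSubmodule (Fin m) k n).map (Ideal.Quotient.mkₐ k I).toLinearMap
      = Submodule.span k {Ideal.Quotient.mkₐ k I (monomial (Finsupp.single v n) 1)} := by
    rw [image_span]
    apply le_antisymm
    · rw [Submodule.span_le]
      rintro x ⟨u, hu, rfl⟩
      rcases eq_or_ne u (Finsupp.single v n) with rfl | hne
      · exact Submodule.subset_span rfl
      · have : ∃ i, i ≠ v ∧ u i ≠ 0 := by
          by_contra hc
          push_neg at hc
          apply hne
          have h2 : u = Finsupp.single v (u v) := by
            ext j
            rcases eq_or_ne j v with rfl | hj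
            · simp
            · simp [Finsupp.single_apply, Ne.symm hj, hc j hj]
          rw [h2] at hu ⊢
          rw [Set.mem_setOf_eq, degree_single''] at hu
          rw [hu]
        obtain ⟨i, hiv, hui⟩ := this
        have hz : Ideal.Quotient.mkₐ k I (monomial u 1) = 0 := by
          rw [Ideal.Quotient.mkₐ_eq_mk, Ideal.Quotient.eq_zero_iff_mem]
          exact hmem u i hiv hui
        simp only [hz]
        exact Submodule.zero_mem _
    · apply Submodule.span_mono
      rintro x rfl
      exact ⟨Finsupp.single v n, by simp [degree_single''], rfl⟩
  have hne0 : Ideal.Quotient.mkₐ k I (monomial (Finsupp.single v n) (1:k)) ≠ 0 := by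
    intro h0
    rw [Ideal.Quotient.mkₐ_eq_mk, Ideal.Quotient.eq_zero_iff_mem] at h0
    exact hnot n h0
  rw [hspan]
  exact finrank_span_singleton hne0

section
variable {k : Type} [Field k] {d : ℕ}

lemma mem_I1 (u : Fin (d+1) →₀ ℕ) (i : Fin (d+1)) (hiv : i ≠ Fin.last d) (hui : u i ≠ 0) :
    monomial u (1:k) ∈ Ideal.span (Set.range fun i : Fin d => (X i.castSucc : MvPolynomial (Fin (d + 1)) k)) := by
  rw [eq_single_add_sub u i hui, monomial_single_add, pow_one]
  refine Ideal.mul_mem_right _ _ (Ideal.subset_span ⟨i.castPred hiv, ?_⟩)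
  simp

lemma mem_I2 (u : Fin (d+1) →₀ ℕ) (i : Fin (d+1)) (hiv : i ≠ 0) (hui : u i ≠ 0) :
    monomial u (1:k) ∈ Ideal.span (Set.range fun i : Fin d => (X i.succ : MvPolynomial (Fin (d + 1)) k)) := by
  rw [eq_single_add_sub u i hui, monomial_single_add, pow_one]
  refine Ideal.mul_mem_right _ _ (Ideal.subset_span ⟨i.pred hiv, ?_⟩)
  simp

lemma not_mem_I1 (n : ℕ) :
    monomial (Finsupp.single (Fin.last d) n) (1:k) ∉
      Ideal.span (Set.range fun i : Fin d => (X i.castSucc : MvPolynomial (Fin (d + 1)) k)) := by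
  intro hmem
  set g : Fin (d+1) → k := fun j => if j = Fin.last d then (1:k) else 0 with hg
  have hle : Ideal.span (Set.range fun i : Fin d => (X i.castSucc : MvPolynomial (Fin (d + 1)) k))
      ≤ RingHom.ker (aeval g).toRingHom := by
    rw [Ideal.span_le]
    rintro x ⟨i, rfl⟩
    simp [RingHom.mem_ker, hg, Fin.castSucc_lt_last i |>.ne]
  have h := hle hmem
  rw [RingHom.mem_ker] at h
  rw [show Finsupp.single (Fin.last d) n = Finsupp.single (Fin.last d) n + 0 by simp,
    monomial_single_add] at h
  simp [hg] at h

lemma not_mem_I2 (n : ℕ) :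
    monomial (Finsupp.single (0 : Fin (d+1)) n) (1:k) ∉
      Ideal.span (Set.range fun i : Fin d => (X i.succ : MvPolynomial (Fin (d + 1)) k)) := by
  intro hmem
  set g : Fin (d+1) → k := fun j => if j = 0 then (1:k) else 0 with hg
  have hle : Ideal.span (Set.range fun i : Fin d => (X i.succ : MvPolynomial (Fin (d + 1)) k))
      ≤ RingHom.ker (aeval g).toRingHom := by
    rw [Ideal.span_le]
    rintro x ⟨i, rfl⟩
    simp [RingHom.mem_ker, hg, Fin.succ_ne_zero i]
  have h := hle hmem
  rw [RingHom.mem_ker] at h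
  rw [show Finsupp.single (0 : Fin (d+1)) n = Finsupp.single (0 : Fin (d+1)) n + 0 by simp,
    monomial_single_add] at h
  simp [hg] at h

lemma Imin_le_I1 :
    Ideal.span {p : MvPolynomial (Fin (d+1)) k | ∃ i j : Fin d,
        p = X i.castSucc * X j.succ - X j.castSucc * X i.succ} ≤
      Ideal.span (Set.range fun i : Fin d => (X i.castSucc : MvPolynomial (Fin (d + 1)) k)) := by
  rw [Ideal.span_le]
  rintro p ⟨i, j, rfl⟩
  refine sub_mem (Ideal.mul_mem_right _ _ (Ideal.subset_span ⟨i, rfl⟩))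
    (Ideal.mul_mem_right _ _ (Ideal.subset_span ⟨j, rfl⟩))

lemma Imin_le_I2 :
    Ideal.span {p : MvPolynomial (Fin (d+1)) k | ∃ i j : Fin d,
        p = X i.castSucc * X j.succ - X j.castSucc * X i.succ} ≤
      Ideal.span (Set.range fun i : Fin d => (X i.succ : MvPolynomial (Fin (d + 1)) k)) := by
  rw [Ideal.span_le]
  rintro p ⟨i, j, rfl⟩
  refine sub_mem (Ideal.mul_mem_left _ _ (Ideal.subset_span ⟨j, rfl⟩))
    (Ideal.mul_mem_left _ _ (Ideal.subset_span ⟨i, rfl⟩))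

end

namespace RNC
variable {d : ℕ}

/-- weighted sum of exponents -/
def SF (g : Fin (d+1) → ℕ) (u : Fin (d+1) →₀ ℕ) : ℕ := ∑ i, g i * u i

lemma SF_add (g : Fin (d+1) → ℕ) (u v : Fin (d+1) →₀ ℕ) :
    SF g (u + v) = SF g u + SF g v := by
  simp [SF, mul_add, Finset.sum_add_distrib]

lemma SF_single (g : Fin (d+1) → ℕ) (a : Fin (d+1)) (e : ℕ) :
    SF g (Finsupp.single a e) = g a * e := by
  simp [SF, Finsupp.single_apply, mul_ite, Finset.sum_ite_eq']

def wt (u : Fin (d+1) →₀ ℕ) : ℕ := SF (fun i => (i:ℕ)) u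
def deg (u : Fin (d+1) →₀ ℕ) : ℕ := SF (fun _ => 1) u
def cow (u : Fin (d+1) →₀ ℕ) : ℕ := SF (fun i => d - (i:ℕ)) u
def Wm (u : Fin (d+1) →₀ ℕ) : ℕ := SF (fun i => (i:ℕ) * (d - (i:ℕ))) u
def mid (u : Fin (d+1) →₀ ℕ) : ℕ :=
  SF (fun i => if (i:ℕ) ≠ 0 ∧ (i:ℕ) ≠ d then 1 else 0) u


@[simp] lemma wt_add (u v : Fin (d+1) →₀ ℕ) : wt (u+v) = wt u + wt v := SF_add _ u v
@[simp] lemma deg_add (u v : Fin (d+1) →₀ ℕ) : deg (u+v) = deg u + deg v := SF_add _ u v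
@[simp] lemma cow_add (u v : Fin (d+1) →₀ ℕ) : cow (u+v) = cow u + cow v := SF_add _ u v
@[simp] lemma Wm_add (u v : Fin (d+1) →₀ ℕ) : Wm (u+v) = Wm u + Wm v := SF_add _ u v
@[simp] lemma mid_add (u v : Fin (d+1) →₀ ℕ) : mid (u+v) = mid u + mid v := SF_add _ u v
@[simp] lemma wt_single (a : Fin (d+1)) (e : ℕ) : wt (Finsupp.single a e) = (a:ℕ) * e := SF_single _ a e
@[simp] lemma deg_single (a : Fin (d+1)) (e : ℕ) : deg (Finsupp.single a e) = e := by
  rw [deg, SF_single, one_mul]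
@[simp] lemma cow_single (a : Fin (d+1)) (e : ℕ) : cow (Finsupp.single a e) = (d - (a:ℕ)) * e := SF_single _ a e
@[simp] lemma Wm_single (a : Fin (d+1)) (e : ℕ) : Wm (Finsupp.single a e) = ((a:ℕ) * (d - (a:ℕ))) * e := SF_single _ a e
@[simp] lemma mid_single (a : Fin (d+1)) (e : ℕ) :
    mid (Finsupp.single a e) = if (a:ℕ) ≠ 0 ∧ (a:ℕ) ≠ d then e else 0 := by
  rw [mid, SF_single]
  split_ifs <;> simp

lemma deg_eq_degree (u : Fin (d+1) →₀ ℕ) : deg u = Finsupp.degree u := by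
  rw [Finsupp.degree, deg, SF]
  simp only [one_mul]
  exact (Finset.sum_subset (Finset.subset_univ _) (by
    intro i _ hi
    simpa using hi)).symm

lemma cow_add_wt (u : Fin (d+1) →₀ ℕ) : cow u + wt u = d * deg u := by
  rw [cow, wt, deg, SF, SF, SF, ← Finset.sum_add_distrib, Finset.mul_sum]
  apply Finset.sum_congr rfl
  intro i _
  have : (i:ℕ) ≤ d := Nat.lt_succ_iff.mp i.isLt
  rw [← add_mul, one_mul]
  congr 1
  omega

lemma wt_le (u : Fin (d+1) →₀ ℕ) : wt u ≤ d * deg u := by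
  rw [← cow_add_wt u]; omega

/-- canonical representative of degree `n` and weight `w` -/
noncomputable def c (hd : 0 < d) (n w : ℕ) : Fin (d+1) →₀ ℕ :=
  if w % d = 0 then
    Finsupp.single 0 (n - w / d) + Finsupp.single (Fin.last d) (w / d)
  else
    Finsupp.single 0 (n - 1 - w / d) +
      (Finsupp.single (⟨w % d, Nat.lt_succ_of_lt (Nat.mod_lt _ hd)⟩ : Fin (d+1)) 1 +
        Finsupp.single (Fin.last d) (w / d))

lemma div_le (hd : 0 < d) {n w : ℕ} (hw : w ≤ d * n) : w / d ≤ n := by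
  calc w / d ≤ (d * n) / d := Nat.div_le_div_right hw
  _ = n := Nat.mul_div_cancel_left n hd

lemma c_deg (hd : 0 < d) (n w : ℕ) (hw : w ≤ d * n) : deg (c hd n w) = n := by
  have hb : w / d ≤ n := div_le hd hw
  rw [c]
  split_ifs with h
  · simp only [deg_add, deg_single]; omega
  · have hlt : w / d < n := by
      rcases Nat.lt_or_ge (w/d) n with h' | h'
      · exact h'
      · exfalso
        have h1 : w / d = n := le_antisymm hb h'
        have h2 : w = d * n := le_antisymm hw (by
          rw [← h1, Nat.mul_comm]; exact Nat.div_mul_le_self w d)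
        rw [h2, Nat.mul_mod_right] at h
        exact h rfl
    simp only [deg_add, deg_single]; omega

lemma c_wt (hd : 0 < d) (n w : ℕ) (hw : w ≤ d * n) : wt (c hd n w) = w := by
  rw [c]
  split_ifs with h
  · simp only [wt_add, wt_single, Fin.val_last, Fin.val_zero]
    rw [zero_mul, zero_add, Nat.mul_comm, Nat.div_mul_cancel (Nat.dvd_of_mod_eq_zero h)]
  · simp only [wt_add, wt_single, Fin.val_last, Fin.val_zero]
    rw [zero_mul, zero_add, mul_one, Nat.mod_add_div]

lemma mid_eq_zero {u : Fin (d+1) →₀ ℕ} (h : mid u = 0) :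
    ∀ i : Fin (d+1), (i:ℕ) ≠ 0 → (i:ℕ) ≠ d → u i = 0 := by
  intro i h0 hdd
  rw [mid, SF, Finset.sum_eq_zero_iff] at h
  have := h i (Finset.mem_univ i)
  rw [if_pos ⟨h0, hdd⟩, one_mul] at this
  exact this

lemma base_eq (hd : 0 < d) (u : Fin (d+1) →₀ ℕ) (hmid : mid u ≤ 1) :
    u = c hd (deg u) (wt u) := by
  have hlast0 : ((Fin.last d : Fin (d+1)):ℕ) ≠ 0 := by simp; omega
  interval_cases hm : mid u
  · -- mid u = 0
    have hz := mid_eq_zero hm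
    have h2 : u = Finsupp.single 0 (u 0) + Finsupp.single (Fin.last d) (u (Fin.last d)) := by
      ext i
      rcases eq_or_ne i 0 with rfl | h0
      · simp [Finsupp.single_apply, Ne.symm (show (0 : Fin (d+1)) ≠ Fin.last d from
          fun h => hlast0 (by rw [← h]; rfl))]
      · rcases eq_or_ne i (Fin.last d) with rfl | hl
        · simp only [Finsupp.coe_add, Pi.add_apply, Finsupp.single_apply, if_neg (Ne.symm h0),
            if_pos rfl, zero_add, if_true]
        · have hi0 : (i:ℕ) ≠ 0 := fun h => h0 (Fin.ext h)
          have hid : (i:ℕ) ≠ d := fun h => hl (Fin.ext (by simpa using h))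
          simp [Finsupp.single_apply, Ne.symm h0, Ne.symm hl, hz i hi0 hid]
    rw [h2]
    simp only [deg_add, deg_single, wt_add, wt_single, Fin.val_last, Fin.val_zero,
      zero_mul, zero_add]
    rw [c, if_pos (Nat.mul_mod_right d _), Nat.mul_div_cancel_left _ hd]
    congr 1
    congr 1
    omega
  · -- mid u = 1
    have hex : ∃ m : Fin (d+1), ((m:ℕ) ≠ 0 ∧ (m:ℕ) ≠ d) ∧ u m ≠ 0 := by
      by_contra hc
      push_neg at hc
      have : mid u = 0 := by
        rw [mid, SF]
        apply Finset.sum_eq_zero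
        intro i _
        split_ifs with h
        · rw [one_mul]
          exact hc i h
        · exact zero_mul _
      omega
    obtain ⟨m, ⟨hm0, hmd⟩, hum⟩ := hex
    have hsum : (if ((m:ℕ) ≠ 0 ∧ (m:ℕ) ≠ d) then 1 else 0) * u m +
        ∑ i ∈ Finset.univ.erase m,
          (if (i:ℕ) ≠ 0 ∧ (i:ℕ) ≠ d then 1 else 0) * u i = mid u :=
      Finset.add_sum_erase Finset.univ
        (fun i : Fin (d+1) => (if (i:ℕ) ≠ 0 ∧ (i:ℕ) ≠ d then 1 else 0) * u i) (Finset.mem_univ m)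
    rw [hm, if_pos ⟨hm0, hmd⟩, one_mul] at hsum
    have hum1 : u m = 1 := by omega
    have hrest : ∑ i ∈ Finset.univ.erase m,
        (if (i:ℕ) ≠ 0 ∧ (i:ℕ) ≠ d then 1 else 0) * u i = 0 := by omega
    rw [Finset.sum_eq_zero_iff] at hrest
    have hz2 : ∀ i : Fin (d+1), i ≠ m → (i:ℕ) ≠ 0 → (i:ℕ) ≠ d → u i = 0 := by
      intro i him hi0 hid
      have := hrest i (Finset.mem_erase.mpr ⟨him, Finset.mem_univ i⟩)
      rwa [if_pos ⟨hi0, hid⟩, one_mul] at this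
    have hmlt : (m:ℕ) < d := by have := m.isLt; omega
    set a := u 0 with ha
    set b := u (Fin.last d) with hb
    have hm0' : m ≠ 0 := fun h => hm0 (by rw [h]; rfl)
    have hml' : m ≠ Fin.last d := fun h => hmd (by rw [h]; simp)
    have h2 : u = Finsupp.single 0 a + (Finsupp.single m 1 + Finsupp.single (Fin.last d) b) := by
      ext i
      rcases eq_or_ne i 0 with rfl | h0
      · simp [Finsupp.single_apply, hm0', Ne.symm hm0', ha, Ne.symm (show (0:Fin (d+1)) ≠ Fin.last d from
          fun h => hlast0 (by rw [← h]; rfl))]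
      · rcases eq_or_ne i m with rfl | him
        · simp [Finsupp.single_apply, h0, Ne.symm h0, hum1, hml', Ne.symm hml']
        · rcases eq_or_ne i (Fin.last d) with rfl | hl
          · simp [Finsupp.single_apply, h0, him, hml', Ne.symm him, hd.ne', hb]
          · have hi0 : (i:ℕ) ≠ 0 := fun h => h0 (Fin.ext h)
            have hid : (i:ℕ) ≠ d := fun h => hl (Fin.ext (by simpa using h))
            simp [Finsupp.single_apply, Ne.symm h0, Ne.symm him, Ne.symm hl, hz2 i him hi0 hid]
    rw [h2]
    simp only [deg_add, deg_single, wt_add, wt_single, Fin.val_zero, Fin.val_last,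
      zero_mul, zero_add, mul_one]
    have hmod : (↑m + d * b) % d = (m:ℕ) := by
      rw [Nat.add_mul_mod_self_left, Nat.mod_eq_of_lt hmlt]
    have hdiv : (↑m + d * b) / d = b := by
      rw [Nat.add_mul_div_left _ _ hd, Nat.div_eq_of_lt hmlt, zero_add]
    have hfin : ∀ (h : (↑m + d * b) % d < d + 1),
        (⟨(↑m + d * b) % d, h⟩ : Fin (d+1)) = m := fun h => Fin.ext hmod
    rw [c, if_neg (by rw [hmod]; exact hm0)]
    simp only [hdiv, hfin]
    rw [show a + (1 + b) - 1 - b = a by omega]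

lemma decomp2 (u : Fin (d+1) →₀ ℕ) (m₁ m₂ : Fin (d+1)) (hne : m₁ ≠ m₂)
    (h1 : u m₁ ≠ 0) (h2 : u m₂ ≠ 0) :
    u = Finsupp.single m₁ 1 + (Finsupp.single m₂ 1 +
      (u - Finsupp.single m₁ 1 - Finsupp.single m₂ 1)) := by
  ext i
  rcases eq_or_ne i m₁ with rfl | e1
  · simp [Finsupp.single_apply, Ne.symm hne, hne]
    omega
  · rcases eq_or_ne i m₂ with rfl | e2
    · simp [Finsupp.single_apply, Ne.symm e1, hne, Ne.symm hne]
      omega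
    · simp [Finsupp.single_apply, Ne.symm e1, Ne.symm e2]

lemma decomp1 (u : Fin (d+1) →₀ ℕ) (m : Fin (d+1)) (h2 : 2 ≤ u m) :
    u = Finsupp.single m 1 + (Finsupp.single m 1 +
      (u - Finsupp.single m 1 - Finsupp.single m 1)) := by
  ext i
  rcases eq_or_ne i m with rfl | e1
  · simp [Finsupp.single_apply]
    omega
  · simp [Finsupp.single_apply, Ne.symm e1]

lemma exists_pair (u : Fin (d+1) →₀ ℕ) (h2 : 2 ≤ mid u) :
    ∃ (fi fj : Fin (d+1)) (_ : 0 < (fi:ℕ)) (_ : (fi:ℕ) ≤ (fj:ℕ)) (_ : (fj:ℕ) < d)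
      (v : Fin (d+1) →₀ ℕ),
      u = Finsupp.single fi 1 + (Finsupp.single fj 1 + v) := by
  have hex : ∃ m : Fin (d+1), ((m:ℕ) ≠ 0 ∧ (m:ℕ) ≠ d) ∧ u m ≠ 0 := by
    by_contra hc
    push_neg at hc
    have : mid u = 0 := by
      rw [mid, SF]
      apply Finset.sum_eq_zero
      intro i _
      split_ifs with h
      · rw [one_mul]; exact hc i h
      · exact zero_mul _
    omega
  obtain ⟨m, ⟨hm0, hmd⟩, hum⟩ := hex
  have hmlt : (m:ℕ) < d := by have := m.isLt; omega
  rcases le_or_gt 2 (u m) with hum2 | hum1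
  · exact ⟨m, m, by omega, le_refl _, hmlt, _, decomp1 u m hum2⟩
  · have hum1' : u m = 1 := by omega
    have hsum : (if ((m:ℕ) ≠ 0 ∧ (m:ℕ) ≠ d) then 1 else 0) * u m +
        ∑ i ∈ Finset.univ.erase m,
          (if (i:ℕ) ≠ 0 ∧ (i:ℕ) ≠ d then 1 else 0) * u i = mid u :=
      Finset.add_sum_erase Finset.univ
        (fun i : Fin (d+1) => (if (i:ℕ) ≠ 0 ∧ (i:ℕ) ≠ d then 1 else 0) * u i) (Finset.mem_univ m)
    rw [if_pos ⟨hm0, hmd⟩, one_mul, hum1'] at hsum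
    have hrest : ∑ i ∈ Finset.univ.erase m,
        (if (i:ℕ) ≠ 0 ∧ (i:ℕ) ≠ d then 1 else 0) * u i ≠ 0 := by omega
    obtain ⟨m₂, hm₂mem, hm₂⟩ := Finset.exists_ne_zero_of_sum_ne_zero hrest
    have hm₂ne : m₂ ≠ m := (Finset.mem_erase.mp hm₂mem).1
    have hm₂mid : (m₂:ℕ) ≠ 0 ∧ (m₂:ℕ) ≠ d := by
      by_contra hc
      rw [if_neg hc, zero_mul] at hm₂
      exact hm₂ rfl
    have hum₂ : u m₂ ≠ 0 := by
      rw [if_pos hm₂mid, one_mul] at hm₂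
      exact hm₂
    have hm₂lt : (m₂:ℕ) < d := by have := m₂.isLt; omega
    rcases le_total (m:ℕ) (m₂:ℕ) with hle | hle
    · exact ⟨m, m₂, by omega, hle, hm₂lt, _,
        decomp2 u m m₂ (Ne.symm hm₂ne) hum (by simpa using hum₂)⟩
    · exact ⟨m₂, m, by omega, hle, hmlt, _,
        decomp2 u m₂ m hm₂ne hum₂ hum⟩

lemma Wm_pos (u : Fin (d+1) →₀ ℕ) (h2 : 2 ≤ mid u) : 0 < Wm u := by
  obtain ⟨fi, fj, hi, hij, hj, v, rfl⟩ := exists_pair u h2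
  simp only [Wm_add, Wm_single, mul_one]
  have h1 : 0 < (fi:ℕ) * (d - (fi:ℕ)) := Nat.mul_pos (by omega) (by omega)
  omega

lemma Wm_dec (i j : ℕ) (hi : 0 < i) (hij : i ≤ j) (hj : j < d)
    (v : Fin (d+1) →₀ ℕ) :
    Wm (Finsupp.single (⟨i-1, by omega⟩ : Fin (d+1)) 1 +
        (Finsupp.single (⟨j+1, by omega⟩ : Fin (d+1)) 1 + v)) <
      Wm (Finsupp.single (⟨i, by omega⟩ : Fin (d+1)) 1 +
        (Finsupp.single (⟨j, by omega⟩ : Fin (d+1)) 1 + v)) := by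
  simp only [Wm_add, Wm_single, mul_one]
  have key : (i-1) * (d - (i-1)) + (j+1) * (d - (j+1)) < i * (d - i) + j * (d - j) := by
    zify [show i - 1 ≤ d by omega, show j + 1 ≤ d by omega, show i ≤ d by omega,
      show j ≤ d by omega, show 1 ≤ i from hi]
    nlinarith [hij, hi, hj]
  omega

variable {k : Type} [Field k]

set_option maxHeartbeats 1000000 in
lemma step_congr (Imin : Ideal (MvPolynomial (Fin (d+1)) k))
    (hImin : Imin = Ideal.span
      {p | ∃ i j : Fin d, p = X i.castSucc * X j.succ - X j.castSucc * X i.succ})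
    (i j : ℕ) (hi : 0 < i) (hij : i ≤ j) (hj : j < d) (v : Fin (d+1) →₀ ℕ) :
    Ideal.Quotient.mk Imin (monomial (Finsupp.single (⟨i, by omega⟩ : Fin (d+1)) 1 +
        (Finsupp.single (⟨j, by omega⟩ : Fin (d+1)) 1 + v)) (1:k)) =
      Ideal.Quotient.mk Imin (monomial (Finsupp.single (⟨i-1, by omega⟩ : Fin (d+1)) 1 +
        (Finsupp.single (⟨j+1, by omega⟩ : Fin (d+1)) 1 + v)) (1:k)) := by
  rw [Ideal.Quotient.mk_eq_mk_iff_sub_mem]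
  rw [monomial_single_add, monomial_single_add, monomial_single_add, monomial_single_add]
  set a : Fin d := ⟨i-1, by omega⟩
  set b : Fin d := ⟨j, hj⟩
  have hgen : (X a.castSucc * X b.succ - X b.castSucc * X a.succ :
      MvPolynomial (Fin (d+1)) k) ∈ Imin := by
    rw [hImin]
    exact Ideal.subset_span ⟨a, b, rfl⟩
  have ea : a.castSucc = (⟨i-1, by omega⟩ : Fin (d+1)) := Fin.ext rfl
  have eb : b.succ = (⟨j+1, by omega⟩ : Fin (d+1)) := Fin.ext rfl
  have ec : b.castSucc = (⟨j, by omega⟩ : Fin (d+1)) := Fin.ext rfl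
  have ed : a.succ = (⟨i, by omega⟩ : Fin (d+1)) := Fin.ext (by simp [a]; omega)
  rw [ea, eb, ec, ed] at hgen
  have : (X (⟨i, by omega⟩ : Fin (d+1)) ^ 1 * (X (⟨j, by omega⟩ : Fin (d+1)) ^ 1 *
        monomial v (1:k)) -
      X (⟨i-1, by omega⟩ : Fin (d+1)) ^ 1 * (X (⟨j+1, by omega⟩ : Fin (d+1)) ^ 1 *
        monomial v (1:k))) =
      -(X (⟨i-1, by omega⟩ : Fin (d+1)) * X (⟨j+1, by omega⟩ : Fin (d+1)) -
        X (⟨j, by omega⟩ : Fin (d+1)) * X (⟨i, by omega⟩ : Fin (d+1))) * monomial v 1 := by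
    simp only [pow_one]
    ring
  rw [this]
  exact Ideal.mul_mem_right _ _ (neg_mem hgen)

set_option maxHeartbeats 2000000 in
lemma straighten (hd : 0 < d) (Imin : Ideal (MvPolynomial (Fin (d+1)) k))
    (hImin : Imin = Ideal.span
      {p | ∃ i j : Fin d, p = X i.castSucc * X j.succ - X j.castSucc * X i.succ})
    (N : ℕ) : ∀ u : Fin (d+1) →₀ ℕ, Wm u ≤ N →
    Ideal.Quotient.mk Imin (monomial u (1:k)) =
      Ideal.Quotient.mk Imin (monomial (c hd (deg u) (wt u)) (1:k)) := by
  induction N with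
  | zero =>
    intro u hu
    have hmid : mid u ≤ 1 := by
      by_contra hc
      have := Wm_pos u (by omega)
      omega
    rw [← base_eq hd u hmid]
  | succ N ih =>
    intro u hu
    by_cases hmid : mid u ≤ 1
    · rw [← base_eq hd u hmid]
    · obtain ⟨fi, fj, hi, hij, hj, v, hdec⟩ := exists_pair u (by omega)
      have hfi : fi = (⟨(fi:ℕ), by omega⟩ : Fin (d+1)) := Fin.ext rfl
      have hfj : fj = (⟨(fj:ℕ), by omega⟩ : Fin (d+1)) := Fin.ext rfl
      rw [hfi, hfj] at hdec
      set i := (fi:ℕ)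
      set j := (fj:ℕ)
      set u' := Finsupp.single (⟨i-1, by omega⟩ : Fin (d+1)) 1 +
        (Finsupp.single (⟨j+1, by omega⟩ : Fin (d+1)) 1 + v) with hu'
      have hWm : Wm u' < Wm u := by
        rw [hdec]
        exact Wm_dec i j hi hij hj v
      have hcongr : Ideal.Quotient.mk Imin (monomial u (1:k)) =
          Ideal.Quotient.mk Imin (monomial u' (1:k)) := by
        rw [hdec]
        exact step_congr Imin hImin i j hi hij hj v
      have hdeg : deg u' = deg u := by
        rw [hdec, hu']
        simp only [deg_add, deg_single]
      have hwt : wt u' = wt u := by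
        rw [hdec, hu']
        simp only [wt_add, wt_single, mul_one]
        omega
      rw [hcongr, ih u' (by omega), hdeg, hwt]

lemma SF_eq_support_sum (g : Fin (d+1) → ℕ) (u : Fin (d+1) →₀ ℕ) :
    SF g u = ∑ i ∈ u.support, g i * u i := by
  rw [SF]
  exact (Finset.sum_subset (Finset.subset_univ _) (by
    intro i _ hi
    simp only [Finsupp.mem_support_iff, not_not] at hi
    rw [hi, mul_zero])).symm

/-- the parametrization map to `k[s,t]` -/
noncomputable def phi : MvPolynomial (Fin (d+1)) k →ₐ[k] MvPolynomial (Fin 2) k :=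
  aeval (fun i : Fin (d+1) => MvPolynomial.X 0 ^ (d - (i:ℕ)) * MvPolynomial.X 1 ^ (i:ℕ))

lemma phi_monomial (u : Fin (d+1) →₀ ℕ) :
    phi (monomial u (1:k)) = MvPolynomial.X 0 ^ (cow u) * MvPolynomial.X 1 ^ (wt u) := by
  rw [phi, aeval_monomial, map_one, one_mul, Finsupp.prod]
  simp_rw [mul_pow, ← pow_mul]
  rw [Finset.prod_mul_distrib, Finset.prod_pow_eq_pow_sum, Finset.prod_pow_eq_pow_sum,
    cow, wt, SF_eq_support_sum, SF_eq_support_sum]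

lemma phi_ker (hd : 0 < d) (Imin : Ideal (MvPolynomial (Fin (d+1)) k))
    (hImin : Imin = Ideal.span
      {p | ∃ i j : Fin d, p = X i.castSucc * X j.succ - X j.castSucc * X i.succ}) :
    ∀ p ∈ Imin, (phi p : MvPolynomial (Fin 2) k) = 0 := by
  have hle : Imin ≤ RingHom.ker (phi (k := k) (d := d)).toRingHom := by
    rw [hImin, Ideal.span_le]
    rintro p ⟨a, b, rfl⟩
    have ha := a.isLt
    have hb := b.isLt
    simp only [SetLike.mem_coe, RingHom.mem_ker, AlgHom.toRingHom_eq_coe,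
      RingHom.coe_coe, map_sub, map_mul, phi, aeval_X, Fin.coe_castSucc, Fin.val_succ]
    rw [sub_eq_zero, mul_mul_mul_comm, ← pow_add, ← pow_add,
      mul_mul_mul_comm, ← pow_add, ← pow_add]
    congr 2 <;> omega
  exact fun p hp => hle hp

lemma X0X1 (a b : ℕ) : (MvPolynomial.X 0 : MvPolynomial (Fin 2) k) ^ a * MvPolynomial.X 1 ^ b =
    MvPolynomial.monomial (Finsupp.single (0 : Fin 2) a + Finsupp.single (1 : Fin 2) b) (1:k) := by
  rw [X_pow_eq_monomial, X_pow_eq_monomial, monomial_mul, one_mul]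

lemma indep_mono (n : ℕ) : LinearIndependent k
    (fun w : Fin (d*n+1) => (monomial (Finsupp.single (0 : Fin 2) (d*n - (w:ℕ)) +
      Finsupp.single (1 : Fin 2) (w:ℕ)) (1:k) : MvPolynomial (Fin 2) k)) := by
  have h := (basisMonomials (Fin 2) k).linearIndependent
  rw [coe_basisMonomials] at h
  exact h.comp _ (by
    intro w w' hww
    have := congrArg (fun u : Fin 2 →₀ ℕ => u 1) hww
    simp only [Finsupp.coe_add, Pi.add_apply, Finsupp.single_apply] at this
    ext
    simpa using this)

set_option maxHeartbeats 1000000 in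
lemma rank_Imin (hd : 0 < d) (Imin : Ideal (MvPolynomial (Fin (d+1)) k))
    (hImin : Imin = Ideal.span
      {p | ∃ i j : Fin d, p = X i.castSucc * X j.succ - X j.castSucc * X i.succ}) (n : ℕ) :
    Module.finrank k ((homogeneousSubmodule (Fin (d+1)) k n).map
      (Ideal.Quotient.mkₐ k Imin).toLinearMap) = d * n + 1 := by
  classical
  set f : Fin (d*n+1) → MvPolynomial (Fin (d+1)) k ⧸ Imin :=
    fun w => Ideal.Quotient.mk Imin (monomial (c hd n (w:ℕ)) (1:k)) with hf
  have hspan : (homogeneousSubmodule (Fin (d+1)) k n).map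
      (Ideal.Quotient.mkₐ k Imin).toLinearMap = Submodule.span k (Set.range f) := by
    rw [image_span]
    apply le_antisymm
    · rw [Submodule.span_le]
      rintro x ⟨u, hu, rfl⟩
      have hdeg : deg u = n := by rw [deg_eq_degree]; exact hu
      have hwt : wt u ≤ d * n := by rw [← hdeg]; exact wt_le u
      apply Submodule.subset_span
      refine ⟨⟨wt u, by omega⟩, ?_⟩
      rw [hf]
      simp only [Ideal.Quotient.mkₐ_eq_mk]
      rw [straighten hd Imin hImin (Wm u) u (le_refl _), hdeg]
    · rw [Submodule.span_le]
      rintro x ⟨w, rfl⟩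
      apply Submodule.subset_span
      refine ⟨c hd n (w:ℕ), ?_, ?_⟩
      · show Finsupp.degree _ = n
        rw [← deg_eq_degree]
        exact c_deg hd n _ (by have := w.isLt; omega)
      · rw [hf, Ideal.Quotient.mkₐ_eq_mk]
  have hind : LinearIndependent k f := by
    apply LinearIndependent.of_comp
      (Ideal.Quotient.liftₐ Imin phi (phi_ker hd Imin hImin)).toLinearMap
    have : (Ideal.Quotient.liftₐ Imin phi (phi_ker hd Imin hImin)).toLinearMap ∘ f =
        fun w : Fin (d*n+1) => (monomial (Finsupp.single (0 : Fin 2) (d*n - (w:ℕ)) +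
          Finsupp.single (1 : Fin 2) (w:ℕ)) (1:k) : MvPolynomial (Fin 2) k) := by
      funext w
      have hwle : (w:ℕ) ≤ d * n := by have := w.isLt; omega
      have hcw : wt (c hd n (w:ℕ)) = (w:ℕ) := c_wt hd n _ hwle
      have hcow : cow (c hd n (w:ℕ)) = d * n - (w:ℕ) := by
        have h1 := cow_add_wt (c hd n (w:ℕ))
        rw [hcw, c_deg hd n _ hwle] at h1
        omega
      simp only [Function.comp_apply, hf, AlgHom.toLinearMap_apply, Ideal.Quotient.liftₐ_apply,
        Ideal.Quotient.lift_mk]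
      show phi _ = _
      rw [phi_monomial, hcw, hcow, X0X1]
    rw [this]
    exact indep_mono n
  rw [hspan, finrank_span_eq_card hind, Fintype.card_fin]

end RNC


lemma coeff_zero_mul_one_sub (f : PowerSeries ℚ) :
    PowerSeries.coeff 0 (f * (1 - PowerSeries.X)) = PowerSeries.coeff 0 f := by
  rw [mul_sub, mul_one, map_sub, PowerSeries.coeff_zero_mul_X, sub_zero]

lemma coeff_succ_mul_one_sub (f : PowerSeries ℚ) (n : ℕ) :
    PowerSeries.coeff (n+1) (f * (1 - PowerSeries.X)) =
      PowerSeries.coeff (n+1) f - PowerSeries.coeff n f := by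
  rw [mul_sub, mul_one, map_sub, PowerSeries.coeff_succ_mul_X]

lemma ser1 : (PowerSeries.mk fun _ : ℕ => (1:ℚ)) * (1 - PowerSeries.X) = 1 := by
  ext n
  cases n with
  | zero => rw [coeff_zero_mul_one_sub]; simp
  | succ n => rw [coeff_succ_mul_one_sub]; simp [PowerSeries.coeff_one]

lemma ser3 (d : ℕ) : (PowerSeries.mk fun n : ℕ => ((d:ℚ)*n+1)) * (1 - PowerSeries.X)^2 =
    1 + PowerSeries.C ((d:ℚ) - 1) * PowerSeries.X := by
  rw [pow_two, ← mul_assoc]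
  ext n
  match n with
  | 0 =>
    rw [coeff_zero_mul_one_sub, coeff_zero_mul_one_sub]
    simp
  | 1 =>
    rw [coeff_succ_mul_one_sub, coeff_succ_mul_one_sub, coeff_zero_mul_one_sub]
    simp [PowerSeries.coeff_one, PowerSeries.coeff_X]
  | (n+2) =>
    rw [coeff_succ_mul_one_sub, coeff_succ_mul_one_sub, coeff_succ_mul_one_sub]
    simp only [PowerSeries.coeff_mk, map_add, PowerSeries.coeff_one, PowerSeries.coeff_C_mul,
      PowerSeries.coeff_X, if_neg (Nat.succ_ne_zero _), if_neg (by omega : ¬ n + 2 = 1)]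
    push_cast
    ring

/-- On the rational normal cone `R` of degree `d` (the quotient of `k[x₀,…,x_d]` by the
2×2-minors of the matrix with rows `(x₀,…,x_{d-1})`, `(x₁,…,x_d)`), with the two rulings
`I₁ = (x₀,…,x_{d-1})` and `I₂ = (x₁,…,x_d)`:
`HS_{R/I₁} = HS_{R/I₂} = 1/(1-t)`, `HS_R = (1+(d-1)t)/(1-t)²`, hence
`HS_{R/I₁}·HS_{R/I₂}/HS_R = 1/(1+(d-1)t)`, which evaluates to `1/d` at `t = 1`. -/
theorem rational_normal_cone_hilbert_series (k : Type) [Field k] (d : ℕ) (hd : 1 ≤ d)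
    (Imin I₁ I₂ : Ideal (MvPolynomial (Fin (d + 1)) k))
    (hImin : Imin = Ideal.span
      {p | ∃ i j : Fin d, p = X i.castSucc * X j.succ - X j.castSucc * X i.succ})
    (hI₁ : I₁ = Ideal.span (Set.range fun i : Fin d => (X i.castSucc : MvPolynomial (Fin (d + 1)) k)))
    (hI₂ : I₂ = Ideal.span (Set.range fun i : Fin d => (X i.succ : MvPolynomial (Fin (d + 1)) k))) :
    hilbSeries k (Imin ⊔ I₁) * (1 - PowerSeries.X) = 1 ∧
    hilbSeries k (Imin ⊔ I₂) * (1 - PowerSeries.X) = 1 ∧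
    hilbSeries k Imin * (1 - PowerSeries.X) ^ 2 =
      1 + PowerSeries.C ((d : ℚ) - 1) * PowerSeries.X ∧
    hilbSeries k (Imin ⊔ I₁) * hilbSeries k (Imin ⊔ I₂) *
        (1 + PowerSeries.C ((d : ℚ) - 1) * PowerSeries.X) = hilbSeries k Imin ∧
    (1 : ℚ) / (1 + ((d : ℚ) - 1)) = 1 / d := by
  have hd0 : 0 < d := hd
  have hsup1 : Imin ⊔ I₁ = I₁ := by
    rw [sup_eq_right, hImin, hI₁]; exact Imin_le_I1
  have hsup2 : Imin ⊔ I₂ = I₂ := by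
    rw [sup_eq_right, hImin, hI₂]; exact Imin_le_I2
  have h1 : hilbSeries k (Imin ⊔ I₁) = PowerSeries.mk fun _ => (1:ℚ) := by
    rw [hsup1]
    ext n
    simp only [hilbSeries, PowerSeries.coeff_mk]
    rw [hI₁, rank_one _ (Fin.last d) (fun u i hi hui => mem_I1 u i hi hui) not_mem_I1 n,
      Nat.cast_one]
  have h2 : hilbSeries k (Imin ⊔ I₂) = PowerSeries.mk fun _ => (1:ℚ) := by
    rw [hsup2]
    ext n
    simp only [hilbSeries, PowerSeries.coeff_mk]
    rw [hI₂, rank_one _ (0 : Fin (d+1)) (fun u i hi hui => mem_I2 u i hi hui) not_mem_I2 n,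
      Nat.cast_one]
  have h3 : hilbSeries k Imin = PowerSeries.mk fun n : ℕ => ((d:ℚ)*n+1) := by
    ext n
    simp only [hilbSeries, PowerSeries.coeff_mk]
    rw [RNC.rank_Imin hd0 Imin hImin n]
    push_cast
    ring
  have gA : hilbSeries k (Imin ⊔ I₁) * (1 - PowerSeries.X) = 1 := by rw [h1]; exact ser1
  have gB : hilbSeries k (Imin ⊔ I₂) * (1 - PowerSeries.X) = 1 := by rw [h2]; exact ser1
  have gC : hilbSeries k Imin * (1 - PowerSeries.X) ^ 2 =
      1 + PowerSeries.C ((d : ℚ) - 1) * PowerSeries.X := by rw [h3]; exact ser3 d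
  refine ⟨gA, gB, gC, ?_, ?_⟩
  · linear_combination (hilbSeries k Imin * (hilbSeries k (Imin ⊔ I₂) * (1 - PowerSeries.X))) * gA
      + hilbSeries k Imin * gB
      - (hilbSeries k (Imin ⊔ I₁) * hilbSeries k (Imin ⊔ I₂)) * gC
  · rw [show (1:ℚ) + ((d:ℚ) - 1) = (d:ℚ) by ring]
end

section
/- Let R = k[x,y,z]/(y²z - x³) where k is a field and x, y, z have degree 1, and let I = (x, y) ⊆ R. Then for the Hilbert series factorizations HS_{R/I}(t) = e_1(t)/(1-t) and HS_{R/I²}(t) = e_2(t)/(1-t), one has e_1(1) = 1 but e_2(1) = 3; in particular e_2(1) ≠ 2·e_1(1). -/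
open PowerSeries MvPolynomial

variable {k : Type} [Field k]

lemma deg3 (d : Fin 3 →₀ ℕ) : d.degree = d 0 + d 1 + d 2 := by
  rw [Finsupp.degree_apply, Finset.sum_subset (Finset.subset_univ d.support)
    (fun i _ h => by simpa using h), Fin.sum_univ_three]

lemma eq_rep (m : Fin 3 →₀ ℕ) :
    m = Finsupp.single 0 (m 0) + Finsupp.single 1 (m 1) + Finsupp.single 2 (m 2) := by
  ext i; fin_cases i <;> simp [Finsupp.single_apply]

lemma map_homog_eq_span (I : Ideal (MvPolynomial (Fin 3) k)) (n : ℕ) (S : Set (Fin 3 →₀ ℕ))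
    (hS : ∀ m ∈ S, Finsupp.degree m = n)
    (hC : ∀ m : Fin 3 →₀ ℕ, Finsupp.degree m = n → m ∉ S →
      (monomial m (1:k)) ∈ I) :
    (homogeneousSubmodule (Fin 3) k n).map (Ideal.Quotient.mkₐ k I).toLinearMap
      = Submodule.span k ((fun m => Ideal.Quotient.mk I (monomial m (1:k))) '' S) := by
  apply le_antisymm
  · rintro _ ⟨p, hp, rfl⟩
    have hp' : p.IsHomogeneous n := hp
    have key : (Ideal.Quotient.mkₐ k I).toLinearMap p
        = ∑ m ∈ p.support, coeff m p • Ideal.Quotient.mk I (monomial m (1:k)) := by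
      conv_lhs => rw [p.as_sum]
      rw [map_sum]
      refine Finset.sum_congr rfl fun m hm => ?_
      have : monomial m (coeff m p) = coeff m p • monomial m (1:k) := by
        rw [smul_monomial, smul_eq_mul, mul_one]
      rw [this, map_smul]; rfl
    rw [key]
    apply Submodule.sum_mem
    intro m hm
    by_cases hmS : m ∈ S
    · exact Submodule.smul_mem _ _ (Submodule.subset_span ⟨m, hmS, rfl⟩)
    · have hd : Finsupp.degree m = n := by
        rw [Finsupp.degree_eq_weight_one]
        exact hp' (mem_support_iff.mp hm)
      have h0 : Ideal.Quotient.mk I (monomial m (1:k)) = 0 :=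
        Ideal.Quotient.eq_zero_iff_mem.mpr (hC m hd hmS)
      rw [h0, smul_zero]; exact Submodule.zero_mem _
  · rw [Submodule.span_le]
    rintro _ ⟨m, hm, rfl⟩
    exact ⟨monomial m 1, isHomogeneous_monomial _ (hS m hm), rfl⟩

lemma J_eq : (Ideal.span {MvPolynomial.X 0, MvPolynomial.X 1} : Ideal (MvPolynomial (Fin 3) k))
    = Ideal.span ((fun s => MvPolynomial.monomial s (1:k)) ''
        {Finsupp.single 0 1, Finsupp.single 1 1}) := by
  rw [Set.image_insert_eq, Set.image_singleton]
  rfl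


lemma XmulX (i j : Fin 3) : (MvPolynomial.X i * MvPolynomial.X j : MvPolynomial (Fin 3) k)
    = MvPolynomial.monomial (Finsupp.single i 1 + Finsupp.single j 1) 1 := by
  rw [show (MvPolynomial.X i : MvPolynomial (Fin 3) k)
      = monomial (Finsupp.single i 1) 1 from rfl,
    show (MvPolynomial.X j : MvPolynomial (Fin 3) k)
      = monomial (Finsupp.single j 1) 1 from rfl, monomial_mul, mul_one]

lemma Jsq_eq : ((Ideal.span {MvPolynomial.X 0, MvPolynomial.X 1} : Ideal (MvPolynomial (Fin 3) k)) ^ 2)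
    = Ideal.span ((fun s => MvPolynomial.monomial s (1:k)) ''
        {Finsupp.single 0 2, Finsupp.single 0 1 + Finsupp.single 1 1, Finsupp.single 1 2}) := by
  rw [pow_two, Ideal.span_mul_span']
  congr 1
  rw [Set.image_insert_eq, Set.image_insert_eq, Set.image_singleton]
  ext p
  constructor
  · rintro ⟨a, ha, b, hb, rfl⟩
    rcases ha with rfl | rfl <;> rcases hb with rfl | rfl <;>
      simp [XmulX, ← Finsupp.single_add, add_comm]
  · intro hp
    rcases hp with rfl | rfl | rfl
    · exact ⟨_, Or.inl rfl, _, Or.inl rfl, by simp [XmulX, ← Finsupp.single_add]⟩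
    · exact ⟨_, Or.inl rfl, _, Or.inr rfl, by simp [XmulX]⟩
    · exact ⟨_, Or.inr rfl, _, Or.inr rfl, by simp [XmulX, ← Finsupp.single_add]⟩

lemma finrank_J (n : ℕ) :
    Module.finrank k ((homogeneousSubmodule (Fin 3) k n).map
      (Ideal.Quotient.mkₐ k (Ideal.span {MvPolynomial.X 0, MvPolynomial.X 1})).toLinearMap) = 1 := by
  classical
  set I : Ideal (MvPolynomial (Fin 3) k) := Ideal.span {MvPolynomial.X 0, MvPolynomial.X 1} with hI
  have hmem : ∀ p : MvPolynomial (Fin 3) k, p ∈ I ↔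
      ∀ xi ∈ p.support, ∃ si ∈ ({Finsupp.single 0 1, Finsupp.single 1 1} : Set (Fin 3 →₀ ℕ)),
        si ≤ xi := by
    intro p; rw [hI, J_eq]; exact mem_ideal_span_monomial_image
  rw [map_homog_eq_span I n {Finsupp.single 2 n} ?_ ?_]
  · rw [Set.image_singleton]
    refine finrank_span_singleton ?_
    intro h
    rw [Ideal.Quotient.eq_zero_iff_mem, hmem] at h
    obtain ⟨si, hsi, hle⟩ := h (Finsupp.single 2 n) (by simp [support_monomial])
    rcases hsi with rfl | rfl <;>
      · rw [Finsupp.single_le_iff] at hle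
        simp [Finsupp.single_apply] at hle
  · rintro m rfl
    simp [deg3, Finsupp.single_apply]
  · intro m hdeg hm
    rw [hmem]
    intro xi hxi
    rw [support_monomial] at hxi
    simp only [one_ne_zero, if_false, Finset.mem_singleton] at hxi
    rw [hxi]
    by_cases h0 : m 0 = 0
    · by_cases h1 : m 1 = 0
      · exfalso
        apply hm
        have hm2 : m = Finsupp.single 2 (m 2) := by
          have := eq_rep m
          rw [h0, h1] at this
          simpa using this
        rw [deg3, h0, h1] at hdeg
        simp only [Nat.zero_add, zero_add] at hdeg
        show m = Finsupp.single 2 n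
        rw [hm2, hdeg]
      · exact ⟨Finsupp.single 1 1, Or.inr rfl,
          Finsupp.single_le_iff.mpr (Nat.one_le_iff_ne_zero.mpr h1)⟩
    · exact ⟨Finsupp.single 0 1, Or.inl rfl,
        Finsupp.single_le_iff.mpr (Nat.one_le_iff_ne_zero.mpr h0)⟩

lemma finrank_Jsq_zero :
    Module.finrank k ((homogeneousSubmodule (Fin 3) k 0).map
      (Ideal.Quotient.mkₐ k ((Ideal.span {MvPolynomial.X 0, MvPolynomial.X 1}) ^ 2)).toLinearMap)
      = 1 := by
  classical
  set I : Ideal (MvPolynomial (Fin 3) k) := (Ideal.span {MvPolynomial.X 0, MvPolynomial.X 1}) ^ 2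
    with hI
  have hmem : ∀ p : MvPolynomial (Fin 3) k, p ∈ I ↔
      ∀ xi ∈ p.support, ∃ si ∈ ({Finsupp.single 0 2, Finsupp.single 0 1 + Finsupp.single 1 1,
        Finsupp.single 1 2} : Set (Fin 3 →₀ ℕ)), si ≤ xi := by
    intro p; rw [hI, Jsq_eq]; exact mem_ideal_span_monomial_image
  rw [map_homog_eq_span I 0 {(0 : Fin 3 →₀ ℕ)} ?_ ?_]
  · rw [Set.image_singleton]
    refine finrank_span_singleton ?_
    intro h
    rw [Ideal.Quotient.eq_zero_iff_mem, hmem] at h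
    obtain ⟨si, hsi, hle⟩ := h 0 (by simp [support_monomial])
    rcases hsi with rfl | rfl | rfl
    · have := Finsupp.single_le_iff.mp hle; simp at this
    · have := (Finsupp.le_def.mp hle) 0; simp [Finsupp.single_apply] at this
    · have := Finsupp.single_le_iff.mp hle; simp at this
  · rintro m rfl; simp
  · intro m hdeg hm
    exact absurd ((Finsupp.degree_eq_zero_iff m).mp hdeg) hm

set_option maxHeartbeats 2000000 in
set_option synthInstance.maxHeartbeats 200000 in
lemma finrank_Jsq_succ (n : ℕ) :
    Module.finrank k ((homogeneousSubmodule (Fin 3) k (n + 1)).map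
      (Ideal.Quotient.mkₐ k ((Ideal.span {MvPolynomial.X 0, MvPolynomial.X 1}) ^ 2)).toLinearMap)
      = 3 := by
  classical
  set I : Ideal (MvPolynomial (Fin 3) k) := (Ideal.span {MvPolynomial.X 0, MvPolynomial.X 1}) ^ 2
    with hI
  have hmem : ∀ p : MvPolynomial (Fin 3) k, p ∈ I ↔
      ∀ xi ∈ p.support, ∃ si ∈ ({Finsupp.single 0 2, Finsupp.single 0 1 + Finsupp.single 1 1,
        Finsupp.single 1 2} : Set (Fin 3 →₀ ℕ)), si ≤ xi := by
    intro p; rw [hI, Jsq_eq]; exact mem_ideal_span_monomial_image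
  set d0 : Fin 3 →₀ ℕ := Finsupp.single 2 (n + 1) with hd0
  set d1 : Fin 3 →₀ ℕ := Finsupp.single 0 1 + Finsupp.single 2 n with hd1
  set d2 : Fin 3 →₀ ℕ := Finsupp.single 1 1 + Finsupp.single 2 n with hd2
  have hvals : d0 0 = 0 ∧ d0 1 = 0 ∧ d0 2 = n + 1 ∧ d1 0 = 1 ∧ d1 1 = 0 ∧ d1 2 = n ∧
      d2 0 = 0 ∧ d2 1 = 1 ∧ d2 2 = n := by
    refine ⟨?_, ?_, ?_, ?_, ?_, ?_, ?_, ?_, ?_⟩ <;>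
      simp [hd0, hd1, hd2, Finsupp.single_apply]
  obtain ⟨h00, h01, h02, h10, h11, h12, h20, h21, h22⟩ := hvals
  rw [map_homog_eq_span I (n + 1) {d0, d1, d2} ?_ ?_]
  · -- finrank of span of images = 3
    set v : Fin 3 → (MvPolynomial (Fin 3) k ⧸ I) :=
      fun i => Ideal.Quotient.mkₐ k I (monomial (![d0, d1, d2] i) (1 : k)) with hv
    have himg : ((fun m => Ideal.Quotient.mk I (monomial m (1:k))) '' {d0, d1, d2})
        = Set.range v := by
      ext x
      constructor
      · rintro ⟨m, hm, rfl⟩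
        rcases hm with rfl | rfl | rfl
        exacts [⟨0, rfl⟩, ⟨1, rfl⟩, ⟨2, rfl⟩]
      · rintro ⟨i, rfl⟩
        fin_cases i
        exacts [⟨d0, Or.inl rfl, rfl⟩, ⟨d1, Or.inr (Or.inl rfl), rfl⟩,
          ⟨d2, Or.inr (Or.inr rfl), rfl⟩]
    rw [himg]
    have hli : LinearIndependent k v := by
      rw [Fintype.linearIndependent_iff]
      intro g hg
      have hps : (monomial d0 (g 0) + monomial d1 (g 1) + monomial d2 (g 2) :
          MvPolynomial (Fin 3) k) ∈ I := by
        rw [← Ideal.Quotient.eq_zero_iff_mem]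
        have : Ideal.Quotient.mkₐ k I
            (monomial d0 (g 0) + monomial d1 (g 1) + monomial d2 (g 2) :
              MvPolynomial (Fin 3) k) = ∑ i : Fin 3, g i • v i := by
          rw [Fin.sum_univ_three]
          have e0 : (monomial d0 (g 0) : MvPolynomial (Fin 3) k) = g 0 • monomial d0 1 := by
            rw [smul_monomial, smul_eq_mul, mul_one]
          have e1 : (monomial d1 (g 1) : MvPolynomial (Fin 3) k) = g 1 • monomial d1 1 := by
            rw [smul_monomial, smul_eq_mul, mul_one]
          have e2 : (monomial d2 (g 2) : MvPolynomial (Fin 3) k) = g 2 • monomial d2 1 := by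
            rw [smul_monomial, smul_eq_mul, mul_one]
          rw [e0, e1, e2, map_add, map_add, map_smul, map_smul, map_smul]
          rfl
        show Ideal.Quotient.mkₐ k I _ = 0
        rw [this, hg]
      rw [hmem] at hps
      have hne01 : d0 ≠ d1 := fun h => by
        have := DFunLike.congr_fun h 0; rw [h00, h10] at this; exact absurd this (by omega)
      have hne02 : d0 ≠ d2 := fun h => by
        have := DFunLike.congr_fun h 1; rw [h01, h21] at this; exact absurd this (by omega)
      have hne12 : d1 ≠ d2 := fun h => by
        have := DFunLike.congr_fun h 0; rw [h10, h20] at this; exact absurd this (by omega)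
      have hcoeff : ∀ i : Fin 3, coeff (![d0, d1, d2] i)
          (monomial d0 (g 0) + monomial d1 (g 1) + monomial d2 (g 2) :
            MvPolynomial (Fin 3) k) = g i := by
        intro i
        fin_cases i <;>
          simp [coeff_add, MvPolynomial.coeff_monomial, hne01, hne02, hne12,
            hne01.symm, hne02.symm, hne12.symm]
      intro i
      by_contra hgi
      obtain ⟨si, hsi, hle⟩ := hps (![d0, d1, d2] i)
        (by rw [mem_support_iff, hcoeff i]; exact hgi)
      have hle0 := Finsupp.le_def.mp hle 0
      have hle1 := Finsupp.le_def.mp hle 1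
      fin_cases i <;> rcases hsi with rfl | rfl | rfl <;>
        simp [Matrix.cons_val_zero, Matrix.cons_val_one, Matrix.head_cons,
          Matrix.cons_val_two, Matrix.tail_cons, Finsupp.add_apply,
          Finsupp.single_apply, h00, h01, h10, h11, h20, h21] at hle0 hle1 <;>
        omega
    rw [finrank_span_eq_card hli, Fintype.card_fin]
  · rintro m (rfl | rfl | rfl) <;>
      · rw [deg3]
        simp only [h00, h01, h02, h10, h11, h12, h20, h21, h22]
        omega
  · intro m hdeg hm
    rw [hmem]
    intro xi hxi
    rw [support_monomial] at hxi
    simp only [one_ne_zero, if_false, Finset.mem_singleton] at hxi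
    rw [hxi]
    rw [deg3] at hdeg
    by_cases ha : 2 ≤ m 0
    · exact ⟨Finsupp.single 0 2, Or.inl rfl, Finsupp.single_le_iff.mpr ha⟩
    by_cases hb : 1 ≤ m 0 ∧ 1 ≤ m 1
    · refine ⟨Finsupp.single 0 1 + Finsupp.single 1 1, Or.inr (Or.inl rfl),
        Finsupp.le_def.mpr fun i => ?_⟩
      fin_cases i <;> simp [Finsupp.single_apply] <;> omega
    by_cases hc : 2 ≤ m 1
    · exact ⟨Finsupp.single 1 2, Or.inr (Or.inr rfl), Finsupp.single_le_iff.mpr hc⟩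
    -- degenerate cases: m ∈ {d0, d1, d2}, contradiction
    exfalso
    apply hm
    have hrep := eq_rep m
    have hcase : (m 0 = 0 ∧ m 1 = 0) ∨ (m 0 = 1 ∧ m 1 = 0) ∨ (m 0 = 0 ∧ m 1 = 1) := by omega
    rcases hcase with ⟨e0, e1⟩ | ⟨e0, e1⟩ | ⟨e0, e1⟩
    · left
      rw [hrep, e0, e1]
      have : m 2 = n + 1 := by omega
      simp [hd0, this]
    · right; left
      rw [hrep, e0, e1]
      have : m 2 = n := by omega
      simp [hd1, this]
    · right; right
      rw [hrep, e0, e1]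
      have : m 2 = n := by omega
      show _ = d2
      rw [hd2]
      have : m 2 = n := by omega
      simp [this]

set_option maxHeartbeats 2000000 in
set_option synthInstance.maxHeartbeats 200000 in
theorem cusp_aux (k : Type) [Field k]
    (F : MvPolynomial (Fin 3) k) (hF : F = MvPolynomial.X 1 ^ 2 * MvPolynomial.X 2 - MvPolynomial.X 0 ^ 3)
    (J : Ideal (MvPolynomial (Fin 3) k)) (hJ : J = Ideal.span {MvPolynomial.X 0, MvPolynomial.X 1}) :
    (PowerSeries.mk fun n =>
      (Module.finrank k ((homogeneousSubmodule (Fin 3) k n).map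
        (Ideal.Quotient.mkₐ k (Ideal.span {F} ⊔ J)).toLinearMap) : ℚ)) * (1 - PowerSeries.X) = 1 ∧
    (PowerSeries.mk fun n =>
      (Module.finrank k ((homogeneousSubmodule (Fin 3) k n).map
        (Ideal.Quotient.mkₐ k (Ideal.span {F} ⊔ J ^ 2)).toLinearMap) : ℚ)) * (1 - PowerSeries.X) =
      1 + 2 * PowerSeries.X ∧
    Polynomial.eval (1 : ℚ) (1 : Polynomial ℚ) = 1 ∧
    Polynomial.eval (1 : ℚ) (1 + 2 * Polynomial.X) = 3 ∧
    Polynomial.eval (1 : ℚ) (1 + 2 * Polynomial.X) ≠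
      2 * Polynomial.eval (1 : ℚ) (1 : Polynomial ℚ) := by
  have hx : MvPolynomial.X 0 ∈ J := hJ ▸ Ideal.subset_span (Or.inl rfl)
  have hy : MvPolynomial.X 1 ∈ J := hJ ▸ Ideal.subset_span (Or.inr rfl)
  have hFJ : F ∈ J := by
    rw [hF, show (MvPolynomial.X 1 ^ 2 * MvPolynomial.X 2 - MvPolynomial.X 0 ^ 3 :
        MvPolynomial (Fin 3) k)
      = (MvPolynomial.X 1 * MvPolynomial.X 2) * MvPolynomial.X 1
        - MvPolynomial.X 0 ^ 2 * MvPolynomial.X 0 from by ring]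
    exact sub_mem (Ideal.mul_mem_left _ _ hy) (Ideal.mul_mem_left _ _ hx)
  have hFJ2 : F ∈ J ^ 2 := by
    rw [hF, show (MvPolynomial.X 1 ^ 2 * MvPolynomial.X 2 - MvPolynomial.X 0 ^ 3 :
        MvPolynomial (Fin 3) k)
      = MvPolynomial.X 2 * (MvPolynomial.X 1 * MvPolynomial.X 1)
        - MvPolynomial.X 0 * (MvPolynomial.X 0 * MvPolynomial.X 0) from by ring, pow_two]
    exact sub_mem (Ideal.mul_mem_left _ _ (Ideal.mul_mem_mul hy hy))
      (Ideal.mul_mem_left _ _ (Ideal.mul_mem_mul hx hx))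
  have h1 : Ideal.span {F} ⊔ J = J :=
    sup_eq_right.mpr ((Ideal.span_le).mpr (Set.singleton_subset_iff.mpr hFJ))
  have h2 : Ideal.span {F} ⊔ J ^ 2 = J ^ 2 :=
    sup_eq_right.mpr ((Ideal.span_le).mpr (Set.singleton_subset_iff.mpr hFJ2))
  rw [h1, h2, hJ]
  refine ⟨?_, ?_, by simp, ?_, ?_⟩
  · ext n
    rw [mul_sub, mul_one, map_sub]
    cases n with
    | zero =>
      simp [PowerSeries.coeff_mk, finrank_J]
    | succ n =>
      rw [PowerSeries.coeff_succ_mul_X]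
      simp [PowerSeries.coeff_mk, finrank_J, PowerSeries.coeff_one]
  · ext n
    rw [mul_sub, mul_one, map_sub,
      show (2 : PowerSeries ℚ) * PowerSeries.X = PowerSeries.X + PowerSeries.X from two_mul _]
    match n with
    | 0 =>
      simp [PowerSeries.coeff_mk, finrank_Jsq_zero]
    | 1 =>
      rw [PowerSeries.coeff_succ_mul_X]
      simp [PowerSeries.coeff_mk, finrank_Jsq_zero, finrank_Jsq_succ, PowerSeries.coeff_one,
        PowerSeries.coeff_X]
      norm_num
    | (n + 2) =>
      rw [PowerSeries.coeff_succ_mul_X]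
      simp [PowerSeries.coeff_mk, finrank_Jsq_succ, PowerSeries.coeff_one, PowerSeries.coeff_X]
  · norm_num
  · norm_num

/-- For the cuspidal cubic cone `R = k[x,y,z]/(y²z - x³)` and the line `I = (x,y)`:
writing `HS_{R/I} = e₁(t)/(1-t)` and `HS_{R/I²} = e₂(t)/(1-t)`, one has `e₁ = 1` and
`e₂ = 1 + 2t`, so `e₁(1) = 1` but `e₂(1) = 3 ≠ 2 = 2·e₁(1)`.  (Here `R/I` and `R/I²`
are identified with the quotients of `k[x,y,z]` by `(y²z-x³) + J` and `(y²z-x³) + J²`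
for `J = (x,y)`.) -/
theorem cusp_cubic_multiplicity_failure (k : Type) [Field k]
    (F : MvPolynomial (Fin 3) k) (hF : F = MvPolynomial.X 1 ^ 2 * MvPolynomial.X 2 - MvPolynomial.X 0 ^ 3)
    (J : Ideal (MvPolynomial (Fin 3) k)) (hJ : J = Ideal.span {MvPolynomial.X 0, MvPolynomial.X 1}) :
    hilbSeries k (Ideal.span {F} ⊔ J) * (1 - PowerSeries.X) = 1 ∧
    hilbSeries k (Ideal.span {F} ⊔ J ^ 2) * (1 - PowerSeries.X) =
      1 + 2 * PowerSeries.X ∧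
    Polynomial.eval (1 : ℚ) (1 : Polynomial ℚ) = 1 ∧
    Polynomial.eval (1 : ℚ) (1 + 2 * Polynomial.X) = 3 ∧
    Polynomial.eval (1 : ℚ) (1 + 2 * Polynomial.X) ≠
      2 * Polynomial.eval (1 : ℚ) (1 : Polynomial ℚ) := by
  unfold hilbSeries
  exact cusp_aux k F hF J hJ
end

section
/- Let k be a field and R = k[x,y,z,w]/(xz, xw, yz, yw), with I = (x, y, w) and J = (y, z, w) as ideals of R. Then HS_{R/I}(t) = HS_{R/J}(t) = 1/(1-t), HS_R(t) = (1 + 2t - t²)/(1-t)², and hence HS_{R/I}(t)·HS_{R/J}(t)/HS_R(t) = 1/(1 + 2t - t²), which evaluates to 1/2 at t = 1. -/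
open PowerSeries MvPolynomial

namespace TwoPlanes

variable {k : Type} [Field k]

local notation "P" => MvPolynomial (Fin 4) k

/-- substitution killing the variables outside `S` -/
noncomputable def κ (S : Finset (Fin 4)) : MvPolynomial (Fin 4) k →ₐ[k] MvPolynomial (Fin 4) k :=
  aeval (fun i => if i ∈ S then X i else 0)

lemma κ_X (S : Finset (Fin 4)) (i : Fin 4) :
    κ (k := k) S (X i) = if i ∈ S then X i else 0 := aeval_X _ _

lemma κ_C (S : Finset (Fin 4)) (a : k) : κ (k := k) S (MvPolynomial.C a) = MvPolynomial.C a := by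
  simp [κ, algHom_C]

lemma κ_monomial_mem (S : Finset (Fin 4)) (d : Fin 4 →₀ ℕ) (c : k)
    (h : ∀ i ∉ S, d i = 0) : κ S (monomial d c) = monomial d c := by
  rw [κ, aeval_monomial, monomial_eq, MvPolynomial.algebraMap_eq]
  congr 1
  apply Finsupp.prod_congr
  intro i hi
  have hiS : i ∈ S := by
    by_contra hiS
    exact (Finsupp.mem_support_iff.mp hi) (h i hiS)
  rw [if_pos hiS]

lemma κ_monomial_not_mem (S : Finset (Fin 4)) (d : Fin 4 →₀ ℕ) (c : k)
    {i0 : Fin 4} (hi0 : i0 ∉ S) (hd : d i0 ≠ 0) : κ S (monomial d c) = 0 := by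
  rw [κ, aeval_monomial]
  have : (d.prod fun i e => (if i ∈ S then X i else 0 : P) ^ e) = 0 := by
    apply Finset.prod_eq_zero (Finsupp.mem_support_iff.mpr hd)
    simp only [if_neg hi0]
    exact zero_pow hd
  rw [this, mul_zero]

lemma sub_κ_mem (S : Finset (Fin 4)) (T : Set P)
    (hT : ∀ i ∉ S, (X i : P) ∈ T) (f : P) :
    f - κ S f ∈ Ideal.span T := by
  induction f using MvPolynomial.induction_on with
  | C a => rw [κ_C, sub_self]; exact zero_mem _
  | add p q hp hq =>
      rw [map_add]
      have : p + q - (κ S p + κ S q) = (p - κ S p) + (q - κ S q) := by ring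
      rw [this]; exact add_mem hp hq
  | mul_X p i hp =>
      by_cases hi : i ∈ S
      · have : p * X i - κ S (p * X i) = (p - κ S p) * X i := by
          rw [map_mul, κ_X, if_pos hi]; ring
        rw [this]; exact Ideal.mul_mem_right _ _ hp
      · have : p * X i - κ S (p * X i) = p * X i := by
          rw [map_mul, κ_X, if_neg hi, mul_zero, sub_zero]
        rw [this]
        exact Ideal.mul_mem_left _ _ (Ideal.subset_span (hT i hi))

lemma finrank_map_eq_of {M N : Type*} [AddCommGroup M] [Module k M]
    [AddCommGroup N] [Module k N] (f : M →ₗ[k] N) (p : Submodule k M)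
    (h : ∀ x ∈ p, f x = 0 → x = 0) :
    Module.finrank k (p.map f) = Module.finrank k p := by
  have hinj : Function.Injective (f.domRestrict p) := by
    rw [← LinearMap.ker_eq_bot, LinearMap.ker_eq_bot']
    intro m hm
    exact Subtype.ext (h m.1 m.2 hm)
  rw [← LinearMap.range_domRestrict]
  exact (LinearEquiv.finrank_eq (LinearEquiv.ofInjective _ hinj)).symm

lemma finrank_quot_eq {A : Type*} [CommRing A] [Algebra k A] (Id : Ideal P)
    (φ : P →ₐ[k] A) (h1 : ∀ f, φ f = 0 → f ∈ Id) (h2 : ∀ f ∈ Id, φ f = 0) (n : ℕ) :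
    Module.finrank k
      ((homogeneousSubmodule (Fin 4) k n).map (Ideal.Quotient.mkₐ k Id).toLinearMap)
      = Module.finrank k ((homogeneousSubmodule (Fin 4) k n).map φ.toLinearMap) := by
  set ψ := Ideal.Quotient.liftₐ Id φ h2 with hψ
  have hcomp : ∀ f : P, ψ (Ideal.Quotient.mkₐ k Id f) = φ f := by
    intro f
    exact AlgHom.congr_fun (Ideal.Quotient.liftₐ_comp Id φ h2) f
  have hmap : ((homogeneousSubmodule (Fin 4) k n).map
        (Ideal.Quotient.mkₐ k Id).toLinearMap).map ψ.toLinearMap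
      = (homogeneousSubmodule (Fin 4) k n).map φ.toLinearMap := by
    have h' : ψ.toLinearMap ∘ₗ (Ideal.Quotient.mkₐ k Id).toLinearMap = φ.toLinearMap :=
      LinearMap.ext hcomp
    rw [← Submodule.map_comp, h']
  rw [← hmap]
  refine (finrank_map_eq_of _ _ ?_).symm
  intro x hx hψx
  rcases hx with ⟨f, hf, rfl⟩
  have : φ f = 0 := by rw [← hcomp]; exact hψx
  have hfI : f ∈ Id := h1 f this
  show Ideal.Quotient.mkₐ k Id f = 0
  rw [Ideal.Quotient.mkₐ_eq_mk]
  exact Ideal.Quotient.eq_zero_iff_mem.mpr hfI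

lemma degree_eq (d : Fin 4 →₀ ℕ) : d.degree = d 0 + d 1 + d 2 + d 3 := by
  rw [show d.degree = ∑ i ∈ d.support, d i from rfl, Finset.sum_subset (Finset.subset_univ d.support)
    (fun i _ hi => Finsupp.notMem_support_iff.mp hi)]
  exact Fin.sum_univ_four d

lemma degree_single (i0 : Fin 4) (m : ℕ) : (Finsupp.single i0 m).degree = m := by
  rw [degree_eq]; fin_cases i0 <;> simp [Finsupp.single_apply]

lemma degree_of_mem {f : P} {n : ℕ} (hf : f ∈ homogeneousSubmodule (Fin 4) k n)
    {d : Fin 4 →₀ ℕ} (hd : d ∈ f.support) : d.degree = n := by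
  rw [Finsupp.degree_eq_weight_one]
  exact (mem_homogeneousSubmodule n f).mp hf (mem_support_iff.mp hd)

lemma map_κ_single (i0 : Fin 4) (n : ℕ) :
    (homogeneousSubmodule (Fin 4) k n).map (κ (k := k) {i0}).toLinearMap
      = Submodule.span k {(X i0 ^ n : P)} := by
  apply le_antisymm
  · rintro x ⟨f, hf, rfl⟩
    show κ {i0} f ∈ _
    rw [f.as_sum, map_sum]
    apply Submodule.sum_mem
    intro d hd
    by_cases h : ∀ i ∉ ({i0} : Finset (Fin 4)), d i = 0
    · rw [κ_monomial_mem _ _ _ h]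
      have hsingle : d = Finsupp.single i0 (d i0) := by
        ext i
        by_cases hi : i = i0
        · subst hi; rw [Finsupp.single_eq_same]
        · rw [Finsupp.single_eq_of_ne' (Ne.symm hi)]
          exact h i (Finset.notMem_singleton.mpr hi)
      have hdeg : d i0 = n := by
        have := degree_of_mem hf hd
        rwa [hsingle, degree_single] at this
      have hmono : monomial d (coeff d f) = coeff d f • (X i0 ^ n : P) := by
        rw [X_pow_eq_monomial, smul_monomial, smul_eq_mul, mul_one, hsingle, hdeg]
      rw [hmono]
      exact Submodule.smul_mem _ _ (Submodule.subset_span rfl)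
    · push_neg at h
      obtain ⟨i, hiS, hdi⟩ := h
      rw [κ_monomial_not_mem _ _ _ hiS hdi]
      exact zero_mem _
  · rw [Submodule.span_le, Set.singleton_subset_iff]
    refine ⟨X i0 ^ n, ?_, ?_⟩
    · rw [SetLike.mem_coe, mem_homogeneousSubmodule, X_pow_eq_monomial]
      exact isHomogeneous_monomial _ (degree_single i0 n)
    · show κ {i0} (X i0 ^ n) = X i0 ^ n
      rw [map_pow, κ_X, if_pos (Finset.mem_singleton_self i0)]

lemma finrank_line (i0 : Fin 4) (n : ℕ) :
    Module.finrank k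
      ((homogeneousSubmodule (Fin 4) k n).map (κ (k := k) {i0}).toLinearMap) = 1 := by
  rw [map_κ_single, finrank_span_singleton (pow_ne_zero n (X_ne_zero i0))]

/-- the generators of the ideal of the union of two planes -/
def Qgen (k : Type) [Field k] : Set (MvPolynomial (Fin 4) k) :=
  {MvPolynomial.X 0 * MvPolynomial.X 2, MvPolynomial.X 0 * MvPolynomial.X 3,
    MvPolynomial.X 1 * MvPolynomial.X 2, MvPolynomial.X 1 * MvPolynomial.X 3}

/-- the projection onto the two planes -/
noncomputable def φQ : MvPolynomial (Fin 4) k →ₐ[k]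
    MvPolynomial (Fin 4) k × MvPolynomial (Fin 4) k :=
  (κ {0, 1}).prod (κ {2, 3})

lemma φQ_apply (f : P) : φQ f = (κ {0, 1} f, κ {2, 3} f) := rfl

lemma φQ_ker : ∀ f ∈ Ideal.span (Qgen k), φQ (k := k) f = 0 := by
  intro f hf
  have h : Ideal.span (Qgen k) ≤ RingHom.ker (φQ (k := k)).toRingHom := by
    rw [Ideal.span_le]
    intro g hg
    rw [SetLike.mem_coe, RingHom.mem_ker]
    simp only [Qgen, Set.mem_insert_iff, Set.mem_singleton_iff] at hg
    rcases hg with rfl | rfl | rfl | rfl <;>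
      (show φQ _ = 0
       rw [φQ_apply, map_mul, map_mul, κ_X, κ_X, κ_X, κ_X,
         if_pos (by decide), if_neg (by decide), if_neg (by decide), if_pos (by decide),
         mul_zero, zero_mul, Prod.mk_eq_zero]
       exact ⟨rfl, rfl⟩)
  exact h hf

lemma D_mem (f : P) :
    f - κ {0, 1} f - κ {2, 3} f + κ {0, 1} (κ {2, 3} f) ∈ Ideal.span (Qgen k) := by
  induction f using MvPolynomial.induction_on with
  | C a => rw [κ_C, κ_C, κ_C]; ring_nf; exact zero_mem _
  | add p q hp hq =>
      rw [map_add, map_add, map_add]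
      have : p + q - (κ {0,1} p + κ {0,1} q) - (κ {2,3} p + κ {2,3} q)
          + (κ {0,1} (κ {2,3} p) + κ {0,1} (κ {2,3} q))
          = (p - κ {0,1} p - κ {2,3} p + κ {0,1} (κ {2,3} p))
          + (q - κ {0,1} q - κ {2,3} q + κ {0,1} (κ {2,3} q)) := by ring
      rw [this]
      exact add_mem hp hq
  | mul_X p i _ =>
      have h01 : p - κ {0,1} p ∈ Ideal.span
          ({MvPolynomial.X 2, MvPolynomial.X 3} : Set P) := by
        apply sub_κ_mem
        intro j hj
        fin_cases j
        · exact absurd (by decide) hj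
        · exact absurd (by decide) hj
        · exact Set.mem_insert _ _
        · exact Set.mem_insert_of_mem _ rfl
      have h23 : p - κ {2,3} p ∈ Ideal.span
          ({MvPolynomial.X 0, MvPolynomial.X 1} : Set P) := by
        apply sub_κ_mem
        intro j hj
        fin_cases j
        · exact Set.mem_insert _ _
        · exact Set.mem_insert_of_mem _ rfl
        · exact absurd (by decide) hj
        · exact absurd (by decide) hj
      fin_cases i
      · show p * MvPolynomial.X 0 - κ {0,1} (p * MvPolynomial.X 0)
            - κ {2,3} (p * MvPolynomial.X 0)
            + κ {0,1} (κ {2,3} (p * MvPolynomial.X 0)) ∈ Ideal.span (Qgen k)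
        obtain ⟨a, b, hab⟩ := Ideal.mem_span_pair.mp h01
        have key : p * MvPolynomial.X 0 - κ {0,1} (p * MvPolynomial.X 0)
            - κ {2,3} (p * MvPolynomial.X 0)
            + κ {0,1} (κ {2,3} (p * MvPolynomial.X 0))
            = a * (MvPolynomial.X 0 * MvPolynomial.X 2)
            + b * (MvPolynomial.X 0 * MvPolynomial.X 3) := by
          rw [map_mul, map_mul, κ_X, if_pos (by decide), κ_X, if_neg (by decide),
            mul_zero, map_zero]
          linear_combination (-(MvPolynomial.X 0 : P)) * hab
        rw [key]
        exact add_mem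
          (Ideal.mul_mem_left _ _ (Ideal.subset_span (Set.mem_insert _ _)))
          (Ideal.mul_mem_left _ _ (Ideal.subset_span (by right; left; rfl)))
      · show p * MvPolynomial.X 1 - κ {0,1} (p * MvPolynomial.X 1)
            - κ {2,3} (p * MvPolynomial.X 1)
            + κ {0,1} (κ {2,3} (p * MvPolynomial.X 1)) ∈ Ideal.span (Qgen k)
        obtain ⟨a, b, hab⟩ := Ideal.mem_span_pair.mp h01
        have key : p * MvPolynomial.X 1 - κ {0,1} (p * MvPolynomial.X 1)
            - κ {2,3} (p * MvPolynomial.X 1)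
            + κ {0,1} (κ {2,3} (p * MvPolynomial.X 1))
            = a * (MvPolynomial.X 1 * MvPolynomial.X 2)
            + b * (MvPolynomial.X 1 * MvPolynomial.X 3) := by
          rw [map_mul, map_mul, κ_X, if_pos (by decide), κ_X, if_neg (by decide),
            mul_zero, map_zero]
          linear_combination (-(MvPolynomial.X 1 : P)) * hab
        rw [key]
        exact add_mem
          (Ideal.mul_mem_left _ _ (Ideal.subset_span (by right; right; left; rfl)))
          (Ideal.mul_mem_left _ _ (Ideal.subset_span (by right; right; right; rfl)))
      · show p * MvPolynomial.X 2 - κ {0,1} (p * MvPolynomial.X 2)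
            - κ {2,3} (p * MvPolynomial.X 2)
            + κ {0,1} (κ {2,3} (p * MvPolynomial.X 2)) ∈ Ideal.span (Qgen k)
        obtain ⟨a, b, hab⟩ := Ideal.mem_span_pair.mp h23
        have key : p * MvPolynomial.X 2 - κ {0,1} (p * MvPolynomial.X 2)
            - κ {2,3} (p * MvPolynomial.X 2)
            + κ {0,1} (κ {2,3} (p * MvPolynomial.X 2))
            = a * (MvPolynomial.X 0 * MvPolynomial.X 2)
            + b * (MvPolynomial.X 1 * MvPolynomial.X 2) := by
          rw [map_mul, map_mul, κ_X, if_neg (by decide), κ_X, if_pos (by decide),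
            mul_zero, map_mul, κ_X, if_neg (by decide), mul_zero]
          linear_combination (-(MvPolynomial.X 2 : P)) * hab
        rw [key]
        exact add_mem
          (Ideal.mul_mem_left _ _ (Ideal.subset_span (Set.mem_insert _ _)))
          (Ideal.mul_mem_left _ _ (Ideal.subset_span (by right; right; left; rfl)))
      · show p * MvPolynomial.X 3 - κ {0,1} (p * MvPolynomial.X 3)
            - κ {2,3} (p * MvPolynomial.X 3)
            + κ {0,1} (κ {2,3} (p * MvPolynomial.X 3)) ∈ Ideal.span (Qgen k)
        obtain ⟨a, b, hab⟩ := Ideal.mem_span_pair.mp h23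
        have key : p * MvPolynomial.X 3 - κ {0,1} (p * MvPolynomial.X 3)
            - κ {2,3} (p * MvPolynomial.X 3)
            + κ {0,1} (κ {2,3} (p * MvPolynomial.X 3))
            = a * (MvPolynomial.X 0 * MvPolynomial.X 3)
            + b * (MvPolynomial.X 1 * MvPolynomial.X 3) := by
          rw [map_mul, map_mul, κ_X, if_neg (by decide), κ_X, if_pos (by decide),
            mul_zero, map_mul, κ_X, if_neg (by decide), mul_zero]
          linear_combination (-(MvPolynomial.X 3 : P)) * hab
        rw [key]
        exact add_mem
          (Ideal.mul_mem_left _ _ (Ideal.subset_span (by right; left; rfl)))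
          (Ideal.mul_mem_left _ _ (Ideal.subset_span (by right; right; right; rfl)))

lemma φQ_mem_ker (f : P) (h : φQ f = 0) : f ∈ Ideal.span (Qgen k) := by
  have h1 : κ {0,1} f = 0 := congrArg Prod.fst h
  have h2 : κ {2,3} f = 0 := congrArg Prod.snd h
  have := D_mem (k := k) f
  rwa [h1, h2, map_zero, sub_zero, sub_zero, add_zero] at this

lemma κ01_monomial_zero (d : Fin 4 →₀ ℕ) (c : k) (h : d 2 ≠ 0 ∨ d 3 ≠ 0) :
    κ {0, 1} (monomial d c) = 0 := by
  rcases h with h | h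
  · exact κ_monomial_not_mem _ _ _ (by decide) h
  · exact κ_monomial_not_mem _ _ _ (by decide) h

lemma κ23_monomial_zero (d : Fin 4 →₀ ℕ) (c : k) (h : d 0 ≠ 0 ∨ d 1 ≠ 0) :
    κ {2, 3} (monomial d c) = 0 := by
  rcases h with h | h
  · exact κ_monomial_not_mem _ _ _ (by decide) h
  · exact κ_monomial_not_mem _ _ _ (by decide) h

lemma κ01_monomial_id (d : Fin 4 →₀ ℕ) (c : k) (h2 : d 2 = 0) (h3 : d 3 = 0) :
    κ {0, 1} (monomial d c) = monomial d c := by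
  apply κ_monomial_mem
  intro i hi
  fin_cases i
  · exact absurd (by decide) hi
  · exact absurd (by decide) hi
  · exact h2
  · exact h3

lemma κ23_monomial_id (d : Fin 4 →₀ ℕ) (c : k) (h0 : d 0 = 0) (h1 : d 1 = 0) :
    κ {2, 3} (monomial d c) = monomial d c := by
  apply κ_monomial_mem
  intro i hi
  fin_cases i
  · exact h0
  · exact h1
  · exact absurd (by decide) hi
  · exact absurd (by decide) hi

lemma d_eq_01 (d : Fin 4 →₀ ℕ) (h2 : d 2 = 0) (h3 : d 3 = 0) :
    d = Finsupp.single 0 (d 0) + Finsupp.single 1 (d 1) := by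
  ext i
  fin_cases i <;>
    simp_all [Finsupp.add_apply, Finsupp.single_apply]

lemma d_eq_23 (d : Fin 4 →₀ ℕ) (h0 : d 0 = 0) (h1 : d 1 = 0) :
    d = Finsupp.single 2 (d 2) + Finsupp.single 3 (d 3) := by
  ext i
  fin_cases i <;>
    simp_all [Finsupp.add_apply, Finsupp.single_apply]

/-- the spanning family for the image of the degree `n` part of the two-plane ring -/
noncomputable def vQ (n : ℕ) : Fin (n + 1) ⊕ Fin (n + 1) →
    MvPolynomial (Fin 4) k × MvPolynomial (Fin 4) k
  | .inl j => (monomial (Finsupp.single 0 (j : ℕ) + Finsupp.single 1 (n - (j : ℕ))) 1, 0)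
  | .inr j => (0, monomial (Finsupp.single 2 (j : ℕ) + Finsupp.single 3 (n - (j : ℕ))) 1)

lemma d01_0 (a b : ℕ) : (Finsupp.single 0 a + Finsupp.single 1 b : Fin 4 →₀ ℕ) 0 = a := by
  simp [Finsupp.single_apply]
lemma d01_1 (a b : ℕ) : (Finsupp.single 0 a + Finsupp.single 1 b : Fin 4 →₀ ℕ) 1 = b := by
  simp [Finsupp.single_apply]
lemma d01_2 (a b : ℕ) : (Finsupp.single 0 a + Finsupp.single 1 b : Fin 4 →₀ ℕ) 2 = 0 := by
  simp [Finsupp.single_apply]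
lemma d01_3 (a b : ℕ) : (Finsupp.single 0 a + Finsupp.single 1 b : Fin 4 →₀ ℕ) 3 = 0 := by
  simp [Finsupp.single_apply]
lemma d23_0 (a b : ℕ) : (Finsupp.single 2 a + Finsupp.single 3 b : Fin 4 →₀ ℕ) 0 = 0 := by
  simp [Finsupp.single_apply]
lemma d23_1 (a b : ℕ) : (Finsupp.single 2 a + Finsupp.single 3 b : Fin 4 →₀ ℕ) 1 = 0 := by
  simp [Finsupp.single_apply]
lemma d23_2 (a b : ℕ) : (Finsupp.single 2 a + Finsupp.single 3 b : Fin 4 →₀ ℕ) 2 = a := by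
  simp [Finsupp.single_apply]
lemma d23_3 (a b : ℕ) : (Finsupp.single 2 a + Finsupp.single 3 b : Fin 4 →₀ ℕ) 3 = b := by
  simp [Finsupp.single_apply]

lemma map_φQ (n : ℕ) (hn : n ≠ 0) :
    (homogeneousSubmodule (Fin 4) k n).map (φQ (k := k)).toLinearMap
      = Submodule.span k (Set.range (vQ n)) := by
  apply le_antisymm
  · rintro x ⟨f, hf, rfl⟩
    show φQ f ∈ _
    rw [f.as_sum, map_sum]
    apply Submodule.sum_mem
    intro d hd
    have hdeg := degree_of_mem hf hd
    rw [degree_eq] at hdeg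
    rw [φQ_apply]
    by_cases h01 : d 0 = 0 ∧ d 1 = 0
    · by_cases h23 : d 2 = 0 ∧ d 3 = 0
      · exfalso
        obtain ⟨ha, hb⟩ := h01
        obtain ⟨hc, hd'⟩ := h23
        omega
      · push_neg at h23
        have hne : d 2 ≠ 0 ∨ d 3 ≠ 0 := by
          by_cases h : d 2 = 0
          · exact Or.inr (h23 h)
          · exact Or.inl h
        rw [κ01_monomial_zero _ _ hne, κ23_monomial_id _ _ h01.1 h01.2]
        have hlt : d 2 < n + 1 := by omega
        have hd3 : n - d 2 = d 3 := by omega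
        have hval : ((0 : P), monomial d (coeff d f))
            = coeff d f • vQ n (.inr ⟨d 2, hlt⟩) := by
          show _ = coeff d f • ((0 : P), MvPolynomial.monomial (Finsupp.single (2:Fin 4) (d 2)
            + Finsupp.single 3 (n - d 2)) (1:k))
          rw [Prod.smul_mk, smul_zero, smul_monomial, smul_eq_mul, mul_one, hd3, ← d_eq_23 d h01.1 h01.2]
        rw [hval]
        exact Submodule.smul_mem _ _ (Submodule.subset_span ⟨_, rfl⟩)
    · push_neg at h01
      have hne : d 0 ≠ 0 ∨ d 1 ≠ 0 := by
        by_cases h : d 0 = 0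
        · exact Or.inr (h01 h)
        · exact Or.inl h
      by_cases h23 : d 2 = 0 ∧ d 3 = 0
      · rw [κ23_monomial_zero _ _ hne, κ01_monomial_id _ _ h23.1 h23.2]
        have hlt : d 0 < n + 1 := by omega
        have hd1 : n - d 0 = d 1 := by omega
        have hval : (monomial d (coeff d f), (0 : P))
            = coeff d f • vQ n (.inl ⟨d 0, hlt⟩) := by
          show _ = coeff d f • (MvPolynomial.monomial (Finsupp.single (0:Fin 4) (d 0)
            + Finsupp.single 1 (n - d 0)) (1:k), (0 : P))
          rw [Prod.smul_mk, smul_zero, smul_monomial, smul_eq_mul, mul_one, hd1, ← d_eq_01 d h23.1 h23.2]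
        rw [hval]
        exact Submodule.smul_mem _ _ (Submodule.subset_span ⟨_, rfl⟩)
      · push_neg at h23
        have hne' : d 2 ≠ 0 ∨ d 3 ≠ 0 := by
          by_cases h : d 2 = 0
          · exact Or.inr (h23 h)
          · exact Or.inl h
        rw [κ01_monomial_zero _ _ hne', κ23_monomial_zero _ _ hne]
        exact zero_mem _
  · rw [Submodule.span_le]
    rintro x ⟨j, rfl⟩
    cases j with
    | inl j =>
        refine ⟨monomial (Finsupp.single 0 (j : ℕ) + Finsupp.single 1 (n - (j : ℕ))) 1, ?_, ?_⟩
        · rw [SetLike.mem_coe, mem_homogeneousSubmodule]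
          apply isHomogeneous_monomial
          rw [degree_eq, d01_0, d01_1, d01_2, d01_3]
          have := j.isLt
          omega
        · show φQ _ = _
          rw [φQ_apply]
          have e1 : κ {0,1} (monomial (Finsupp.single (0:Fin 4) (j : ℕ)
              + Finsupp.single 1 (n - (j : ℕ))) (1:k))
              = MvPolynomial.monomial (Finsupp.single 0 (j : ℕ)
                + Finsupp.single 1 (n - (j : ℕ))) (1:k) := by
            apply κ01_monomial_id
            · exact d01_2 _ _
            · exact d01_3 _ _
          have e2 : κ {2,3} (monomial (Finsupp.single (0:Fin 4) (j : ℕ)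
              + Finsupp.single 1 (n - (j : ℕ))) (1:k)) = 0 := by
            apply κ23_monomial_zero
            by_cases hj : (j : ℕ) = 0
            · right; rw [d01_1]; omega
            · left; rw [d01_0]; omega
          rw [e1, e2]; rfl
    | inr j =>
        refine ⟨monomial (Finsupp.single 2 (j : ℕ) + Finsupp.single 3 (n - (j : ℕ))) 1, ?_, ?_⟩
        · rw [SetLike.mem_coe, mem_homogeneousSubmodule]
          apply isHomogeneous_monomial
          rw [degree_eq, d23_0, d23_1, d23_2, d23_3]
          have := j.isLt
          omega
        · show φQ _ = _
          rw [φQ_apply]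
          have e1 : κ {2,3} (monomial (Finsupp.single (2:Fin 4) (j : ℕ)
              + Finsupp.single 3 (n - (j : ℕ))) (1:k))
              = MvPolynomial.monomial (Finsupp.single 2 (j : ℕ)
                + Finsupp.single 3 (n - (j : ℕ))) (1:k) := by
            apply κ23_monomial_id
            · exact d23_0 _ _
            · exact d23_1 _ _
          have e2 : κ {0,1} (monomial (Finsupp.single (2:Fin 4) (j : ℕ)
              + Finsupp.single 3 (n - (j : ℕ))) (1:k)) = 0 := by
            apply κ01_monomial_zero
            by_cases hj : (j : ℕ) = 0
            · right; rw [d23_3]; omega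
            · left; rw [d23_2]; omega
          rw [e1, e2]; rfl

lemma vQ_li (n : ℕ) : LinearIndependent k (vQ (k := k) n) := by
  have hg : Function.Injective
      (Sum.map
        (fun j : Fin (n+1) => Finsupp.single (0 : Fin 4) (j : ℕ) + Finsupp.single 1 (n - (j : ℕ)))
        (fun j : Fin (n+1) => Finsupp.single (2 : Fin 4) (j : ℕ) + Finsupp.single 3 (n - (j : ℕ)))) := by
    apply Function.Injective.sumMap
    · intro a b h
      have h0 := congrArg (fun d : Fin 4 →₀ ℕ => d 0) h
      simp only [d01_0] at h0
      exact Fin.val_injective h0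
    · intro a b h
      have h0 := congrArg (fun d : Fin 4 →₀ ℕ => d 2) h
      simp only [d23_2] at h0
      exact Fin.val_injective h0
  have hv : vQ (k := k) n = ((basisMonomials (Fin 4) k).prod (basisMonomials (Fin 4) k)) ∘
      (Sum.map
        (fun j : Fin (n+1) => Finsupp.single (0 : Fin 4) (j : ℕ) + Finsupp.single 1 (n - (j : ℕ)))
        (fun j : Fin (n+1) => Finsupp.single (2 : Fin 4) (j : ℕ) + Finsupp.single 3 (n - (j : ℕ)))) := by
    funext j
    cases j with
    | inl j =>
        apply Prod.ext
        · show _ = (((basisMonomials (Fin 4) k).prod (basisMonomials (Fin 4) k))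
            (Sum.inl _)).1
          rw [Module.Basis.prod_apply_inl_fst, coe_basisMonomials]
          rfl
        · show (0 : P) = (((basisMonomials (Fin 4) k).prod (basisMonomials (Fin 4) k))
            (Sum.inl _)).2
          rw [Module.Basis.prod_apply_inl_snd]
    | inr j =>
        apply Prod.ext
        · show (0 : P) = (((basisMonomials (Fin 4) k).prod (basisMonomials (Fin 4) k))
            (Sum.inr _)).1
          rw [Module.Basis.prod_apply_inr_fst]
        · show _ = (((basisMonomials (Fin 4) k).prod (basisMonomials (Fin 4) k))
            (Sum.inr _)).2
          rw [Module.Basis.prod_apply_inr_snd, coe_basisMonomials]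
          rfl
  rw [hv]
  exact (((basisMonomials (Fin 4) k).prod (basisMonomials (Fin 4) k)).linearIndependent).comp _ hg

set_option maxHeartbeats 1000000 in
lemma finrank_Q_pos (n : ℕ) (hn : n ≠ 0) :
    Module.finrank k
      ((homogeneousSubmodule (Fin 4) k n).map (φQ (k := k)).toLinearMap) = 2 * n + 2 := by
  have hcard := finrank_span_eq_card (R := k) (M := MvPolynomial (Fin 4) k × MvPolynomial (Fin 4) k) (vQ_li n)
  rw [map_φQ n hn, hcard]
  simp only [Fintype.card_sum, Fintype.card_fin]
  omega

lemma map_φQ_zero :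
    (homogeneousSubmodule (Fin 4) k 0).map (φQ (k := k)).toLinearMap
      = Submodule.span k {((1 : P), (1 : P))} := by
  apply le_antisymm
  · rintro x ⟨f, hf, rfl⟩
    show φQ f ∈ _
    rw [f.as_sum, map_sum]
    apply Submodule.sum_mem
    intro d hd
    have hdeg := degree_of_mem hf hd
    have hd0 : d = 0 := (Finsupp.degree_eq_zero_iff d).mp hdeg
    subst hd0
    rw [φQ_apply, κ01_monomial_id _ _ rfl rfl, κ23_monomial_id _ _ rfl rfl]
    have : ((MvPolynomial.monomial (0 : Fin 4 →₀ ℕ)) (coeff 0 f),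
        (MvPolynomial.monomial (0 : Fin 4 →₀ ℕ)) (coeff 0 f))
        = coeff 0 f • ((1 : P), (1 : P)) := by
      rw [Prod.smul_mk]
      congr 1 <;>
        rw [MvPolynomial.smul_eq_C_mul, mul_one, MvPolynomial.C_apply]
    rw [this]
    exact Submodule.smul_mem _ _ (Submodule.subset_span rfl)
  · rw [Submodule.span_le, Set.singleton_subset_iff]
    refine ⟨1, ?_, ?_⟩
    · rw [SetLike.mem_coe, mem_homogeneousSubmodule]
      exact isHomogeneous_one (Fin 4) k
    · show φQ 1 = _
      rw [map_one]
      rfl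

lemma finrank_Q_zero :
    Module.finrank k
      ((homogeneousSubmodule (Fin 4) k 0).map (φQ (k := k)).toLinearMap) = 1 := by
  rw [map_φQ_zero]
  exact finrank_span_singleton
    (fun h => one_ne_zero (congrArg Prod.fst h))

lemma coeff_I (n : ℕ) :
    Module.finrank k ((homogeneousSubmodule (Fin 4) k n).map
      (Ideal.Quotient.mkₐ k (Ideal.span
        ({MvPolynomial.X 0, MvPolynomial.X 1, MvPolynomial.X 3} : Set P))).toLinearMap) = 1 := by
  rw [finrank_quot_eq _ (κ {2}) ?h1 ?h2 n, finrank_line]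
  case h1 =>
    intro f h
    have := sub_κ_mem {2} {MvPolynomial.X 0, MvPolynomial.X 1, MvPolynomial.X 3} ?_ f
    · rwa [h, sub_zero] at this
    · intro i hi
      fin_cases i
      · exact Set.mem_insert _ _
      · exact Set.mem_insert_of_mem _ (Set.mem_insert _ _)
      · exact absurd (by decide) hi
      · exact Set.mem_insert_of_mem _ (Set.mem_insert_of_mem _ rfl)
  case h2 =>
    intro f hf
    have h : Ideal.span ({MvPolynomial.X 0, MvPolynomial.X 1, MvPolynomial.X 3} : Set P)
        ≤ RingHom.ker (κ (k := k) {2}).toRingHom := by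
      rw [Ideal.span_le]
      intro g hg
      rw [SetLike.mem_coe, RingHom.mem_ker]
      simp only [Set.mem_insert_iff, Set.mem_singleton_iff] at hg
      rcases hg with rfl | rfl | rfl <;>
        (show κ {2} _ = 0; rw [κ_X, if_neg (by decide)])
    exact h hf

lemma coeff_J (n : ℕ) :
    Module.finrank k ((homogeneousSubmodule (Fin 4) k n).map
      (Ideal.Quotient.mkₐ k (Ideal.span
        ({MvPolynomial.X 1, MvPolynomial.X 2, MvPolynomial.X 3} : Set P))).toLinearMap) = 1 := by
  rw [finrank_quot_eq _ (κ {0}) ?h1 ?h2 n, finrank_line]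
  case h1 =>
    intro f h
    have := sub_κ_mem {0} {MvPolynomial.X 1, MvPolynomial.X 2, MvPolynomial.X 3} ?_ f
    · rwa [h, sub_zero] at this
    · intro i hi
      fin_cases i
      · exact absurd (by decide) hi
      · exact Set.mem_insert _ _
      · exact Set.mem_insert_of_mem _ (Set.mem_insert _ _)
      · exact Set.mem_insert_of_mem _ (Set.mem_insert_of_mem _ rfl)
  case h2 =>
    intro f hf
    have h : Ideal.span ({MvPolynomial.X 1, MvPolynomial.X 2, MvPolynomial.X 3} : Set P)
        ≤ RingHom.ker (κ (k := k) {0}).toRingHom := by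
      rw [Ideal.span_le]
      intro g hg
      rw [SetLike.mem_coe, RingHom.mem_ker]
      simp only [Set.mem_insert_iff, Set.mem_singleton_iff] at hg
      rcases hg with rfl | rfl | rfl <;>
        (show κ {0} _ = 0; rw [κ_X, if_neg (by decide)])
    exact h hf

lemma coeff_Q_zero :
    Module.finrank k ((homogeneousSubmodule (Fin 4) k 0).map
      (Ideal.Quotient.mkₐ k (Ideal.span (Qgen k))).toLinearMap) = 1 := by
  rw [finrank_quot_eq _ φQ φQ_mem_ker φQ_ker 0, finrank_Q_zero]

lemma coeff_Q_pos (n : ℕ) (hn : n ≠ 0) :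
    Module.finrank k ((homogeneousSubmodule (Fin 4) k n).map
      (Ideal.Quotient.mkₐ k (Ideal.span (Qgen k))).toLinearMap) = 2 * n + 2 := by
  rw [finrank_quot_eq _ φQ φQ_mem_ker φQ_ker n, finrank_Q_pos n hn]

lemma series_line {c : ℕ → ℚ} (h : ∀ n, c n = 1) :
    (PowerSeries.mk c) * (1 - PowerSeries.X) = 1 := by
  ext n
  rw [mul_sub, mul_one, map_sub]
  cases n with
  | zero =>
      rw [coeff_zero_mul_X, sub_zero, coeff_mk, h, PowerSeries.coeff_one, if_pos rfl]
  | succ m =>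
      rw [coeff_succ_mul_X, coeff_mk, coeff_mk, h, h, PowerSeries.coeff_one,
        if_neg (Nat.succ_ne_zero m), sub_self]

lemma series_Q {c : ℕ → ℚ} (h0 : c 0 = 1) (h : ∀ n : ℕ, n ≠ 0 → c n = 2 * n + 2) :
    (PowerSeries.mk c) * (1 - PowerSeries.X) ^ 2
      = 1 + 2 * PowerSeries.X - PowerSeries.X ^ 2 := by
  have e : (PowerSeries.mk c) * (1 - PowerSeries.X) ^ 2
      = PowerSeries.mk c
        - ((PowerSeries.mk c) * PowerSeries.X + (PowerSeries.mk c) * PowerSeries.X)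
        + (PowerSeries.mk c) * PowerSeries.X ^ 2 := by ring
  have e2 : (1 + 2 * PowerSeries.X - PowerSeries.X ^ 2 : PowerSeries ℚ)
      = 1 + (PowerSeries.X + PowerSeries.X) - PowerSeries.X ^ 2 := by ring
  rw [e, e2]
  ext n
  rw [map_add, map_sub, map_add, map_sub, map_add, map_add]
  cases n with
  | zero =>
      rw [coeff_zero_mul_X, coeff_mk, h0, PowerSeries.coeff_one, PowerSeries.coeff_X,
        PowerSeries.coeff_mul_X_pow', PowerSeries.coeff_X_pow]
      norm_num
  | succ n =>
      cases n with
      | zero =>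
          rw [coeff_succ_mul_X, coeff_mk, coeff_mk, h0, h 1 one_ne_zero, PowerSeries.coeff_one, PowerSeries.coeff_X,
            PowerSeries.coeff_mul_X_pow', PowerSeries.coeff_X_pow]
          norm_num
      | succ m =>
          rw [coeff_succ_mul_X, coeff_mk, coeff_mk,
            show m + 1 + 1 = m + 2 from rfl,
            PowerSeries.coeff_mul_X_pow (PowerSeries.mk c) 2 m, coeff_mk, PowerSeries.coeff_one, PowerSeries.coeff_X,
            PowerSeries.coeff_X_pow]
          rw [if_neg (by omega), if_neg (by omega), h (m + 2) (by omega), h (m + 1) (by omega)]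
          rcases Nat.eq_zero_or_pos m with hm | hm
          · subst hm
            rw [h0]
            norm_num
          · rw [h m (by omega), if_neg (by omega)]
            push_cast
            ring

lemma series_cancel {a b q : PowerSeries ℚ}
    (ha : a * (1 - PowerSeries.X) = 1) (hb : b * (1 - PowerSeries.X) = 1)
    (hq : q * (1 - PowerSeries.X) ^ 2 = 1 + 2 * PowerSeries.X - PowerSeries.X ^ 2) :
    a * b * (1 + 2 * PowerSeries.X - PowerSeries.X ^ 2) = q := by
  have hne : (1 - PowerSeries.X : PowerSeries ℚ) ≠ 0 := by
    intro hzero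
    have := congrArg (PowerSeries.constantCoeff (R := ℚ)) hzero
    simp at this
  apply mul_right_cancel₀ (pow_ne_zero 2 hne)
  calc a * b * (1 + 2 * PowerSeries.X - PowerSeries.X ^ 2) * (1 - PowerSeries.X) ^ 2
      = (a * (1 - PowerSeries.X)) * (b * (1 - PowerSeries.X))
        * (1 + 2 * PowerSeries.X - PowerSeries.X ^ 2) := by ring
    _ = 1 + 2 * PowerSeries.X - PowerSeries.X ^ 2 := by rw [ha, hb]; ring
    _ = q * (1 - PowerSeries.X) ^ 2 := hq.symm

end TwoPlanes

/-- For the union of two planes `R = k[x,y,z,w]/(xz,xw,yz,yw)` and the two lines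
`I = (x,y,w)`, `J = (y,z,w)`: `HS_{R/I} = HS_{R/J} = 1/(1-t)`,
`HS_R = (1+2t-t²)/(1-t)²`, hence `HS_{R/I}·HS_{R/J}/HS_R = 1/(1+2t-t²)`, which
evaluates to `1/2` at `t = 1`. -/
theorem two_planes_hilbert_series (k : Type) [Field k]
    (Q I J : Ideal (MvPolynomial (Fin 4) k))
    (hQ : Q = Ideal.span {MvPolynomial.X 0 * MvPolynomial.X 2,
      MvPolynomial.X 0 * MvPolynomial.X 3, MvPolynomial.X 1 * MvPolynomial.X 2,
      MvPolynomial.X 1 * MvPolynomial.X 3})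
    (hI : I = Ideal.span {MvPolynomial.X 0, MvPolynomial.X 1, MvPolynomial.X 3})
    (hJ : J = Ideal.span {MvPolynomial.X 1, MvPolynomial.X 2, MvPolynomial.X 3}) :
    hilbSeries k (Q ⊔ I) * (1 - PowerSeries.X) = 1 ∧
    hilbSeries k (Q ⊔ J) * (1 - PowerSeries.X) = 1 ∧
    hilbSeries k Q * (1 - PowerSeries.X) ^ 2 =
      1 + 2 * PowerSeries.X - PowerSeries.X ^ 2 ∧
    hilbSeries k (Q ⊔ I) * hilbSeries k (Q ⊔ J) *
        (1 + 2 * PowerSeries.X - PowerSeries.X ^ 2) = hilbSeries k Q ∧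
    (1 : ℚ) / (1 + 2 * 1 - 1 ^ 2) = 1 / 2 := by
  subst hQ hI hJ
  have hQgen : Ideal.span {MvPolynomial.X 0 * MvPolynomial.X 2,
      MvPolynomial.X 0 * MvPolynomial.X 3, MvPolynomial.X 1 * MvPolynomial.X 2,
      MvPolynomial.X 1 * MvPolynomial.X 3} = Ideal.span (TwoPlanes.Qgen k) := rfl
  have hQI : Ideal.span {MvPolynomial.X 0 * MvPolynomial.X 2,
      MvPolynomial.X 0 * MvPolynomial.X 3, MvPolynomial.X 1 * MvPolynomial.X 2,
      MvPolynomial.X 1 * MvPolynomial.X 3}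
      ⊔ Ideal.span {MvPolynomial.X 0, MvPolynomial.X 1, MvPolynomial.X 3}
      = Ideal.span ({MvPolynomial.X 0, MvPolynomial.X 1, MvPolynomial.X 3}
        : Set (MvPolynomial (Fin 4) k)) := by
    apply sup_eq_right.mpr
    rw [Ideal.span_le]
    intro g hg
    simp only [Set.mem_insert_iff, Set.mem_singleton_iff] at hg
    rcases hg with rfl | rfl | rfl | rfl
    · exact Ideal.mul_mem_right _ _ (Ideal.subset_span (Set.mem_insert _ _))
    · exact Ideal.mul_mem_right _ _ (Ideal.subset_span (Set.mem_insert _ _))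
    · exact Ideal.mul_mem_right _ _
        (Ideal.subset_span (Set.mem_insert_of_mem _ (Set.mem_insert _ _)))
    · exact Ideal.mul_mem_right _ _
        (Ideal.subset_span (Set.mem_insert_of_mem _ (Set.mem_insert _ _)))
  have hQJ : Ideal.span {MvPolynomial.X 0 * MvPolynomial.X 2,
      MvPolynomial.X 0 * MvPolynomial.X 3, MvPolynomial.X 1 * MvPolynomial.X 2,
      MvPolynomial.X 1 * MvPolynomial.X 3}
      ⊔ Ideal.span {MvPolynomial.X 1, MvPolynomial.X 2, MvPolynomial.X 3}
      = Ideal.span ({MvPolynomial.X 1, MvPolynomial.X 2, MvPolynomial.X 3}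
        : Set (MvPolynomial (Fin 4) k)) := by
    apply sup_eq_right.mpr
    rw [Ideal.span_le]
    intro g hg
    simp only [Set.mem_insert_iff, Set.mem_singleton_iff] at hg
    rcases hg with rfl | rfl | rfl | rfl
    · exact Ideal.mul_mem_left _ _
        (Ideal.subset_span (Set.mem_insert_of_mem _ (Set.mem_insert _ _)))
    · exact Ideal.mul_mem_left _ _
        (Ideal.subset_span (Set.mem_insert_of_mem _ (Set.mem_insert_of_mem _ rfl)))
    · exact Ideal.mul_mem_left _ _
        (Ideal.subset_span (Set.mem_insert_of_mem _ (Set.mem_insert _ _)))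
    · exact Ideal.mul_mem_left _ _
        (Ideal.subset_span (Set.mem_insert_of_mem _ (Set.mem_insert_of_mem _ rfl)))
  have h1 : hilbSeries k (Ideal.span ({MvPolynomial.X 0, MvPolynomial.X 1, MvPolynomial.X 3}
      : Set (MvPolynomial (Fin 4) k))) * (1 - PowerSeries.X) = 1 := by
    apply TwoPlanes.series_line
    intro n
    rw [TwoPlanes.coeff_I n]
    norm_num
  have h2 : hilbSeries k (Ideal.span ({MvPolynomial.X 1, MvPolynomial.X 2, MvPolynomial.X 3}
      : Set (MvPolynomial (Fin 4) k))) * (1 - PowerSeries.X) = 1 := by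
    apply TwoPlanes.series_line
    intro n
    rw [TwoPlanes.coeff_J n]
    norm_num
  have h3 : hilbSeries k (Ideal.span (TwoPlanes.Qgen k)) * (1 - PowerSeries.X) ^ 2
      = 1 + 2 * PowerSeries.X - PowerSeries.X ^ 2 := by
    apply TwoPlanes.series_Q
    · rw [TwoPlanes.coeff_Q_zero]; norm_num
    · intro n hn
      rw [TwoPlanes.coeff_Q_pos n hn]
      push_cast
      ring
  rw [hQI, hQJ, hQgen]
  exact ⟨h1, h2, h3, TwoPlanes.series_cancel h1 h2 h3, by norm_num⟩
end
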